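/- arXiv:1603.08553 — 13 statements merged into one kernel-verified Lean document; each statement's English description precedes it below -/
import Mathlib

section
/- Under Assumptions A, with p_n^# := Σ_{m ≥ 0} p_n(m), one has p_{n₁}^# · p_{n₂}^# ≤ (1 + B_{n₂} − A_{n₂}) · p_{n₁+n₂}^# for all n₁, n₂ ≥ 1. -/
open Finset

section CanonicallyOrdered

variable {R : Type*} [NonUnitalNonAssocSemiring R] [PartialOrder R] [CanonicallyOrderedAdd R]

theorem sum_le_sum_range_of_eq_zero {f : ℕ → R} {c : ℕ} (hf : ∀ m, c < m → f m = 0)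
    (s : Finset ℕ) : ∑ m ∈ s, f m ≤ ∑ m ∈ range (c + 1), f m :=
  sum_le_sum_of_ne_zero fun m _ hm => mem_range_succ_iff.2 (not_lt.1 (mt (hf m) hm))

/-- Each row `m₁ ↦ h (m₁ + m₂)` of the expanded product sums distinct values of `h`,
hence is at most the full sum of `h`. -/
theorem sum_mul_sum_le_card_nsmul_sum {f g h : ℕ → R} {c : ℕ}
    (hfgh : ∀ m₁ m₂, f m₁ * g m₂ ≤ h (m₁ + m₂)) (hh : ∀ m, c < m → h m = 0)
    (s t : Finset ℕ) :
    (∑ m ∈ s, f m) * ∑ m ∈ t, g m ≤ #t • ∑ m ∈ range (c + 1), h m := by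
  rw [sum_mul_sum, sum_comm]
  refine sum_le_card_nsmul _ _ _ fun m₂ _ => ?_
  calc ∑ m₁ ∈ s, f m₁ * g m₂
      ≤ ∑ m₁ ∈ s, h (m₁ + m₂) := sum_le_sum fun m₁ _ => hfgh m₁ m₂
    _ = ∑ m ∈ s.map (addRightEmbedding m₂), h m := (sum_map s (addRightEmbedding m₂) h).symm
    _ ≤ ∑ m ∈ range (c + 1), h m := sum_le_sum_range_of_eq_zero hh _

end CanonicallyOrdered

theorem sum_range_eq_sum_Icc {M : Type*} [AddCommMonoid M] {f : ℕ → M} (a b : ℕ)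
    (hf : ∀ m, m < a → f m = 0) : ∑ m ∈ range (b + 1), f m = ∑ m ∈ Icc a b, f m := by
  refine (sum_subset (fun m hm => ?_) fun m hm hm' => hf m ?_).symm
  · simp only [mem_Icc, mem_range] at hm ⊢
    omega
  · simp only [mem_Icc, mem_range] at hm hm'
    omega

theorem psharp_supermultiplicative_general
    (p : ℕ → ℕ → ℕ) (A B : ℕ → ℕ)
    (hzero : ∀ n, 1 ≤ n → ∀ m, (m < A n ∨ B n < m) → p n m = 0)
    (hsuper : ∀ n₁ n₂, 1 ≤ n₁ → 1 ≤ n₂ → ∀ m₁ m₂,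
      p n₁ m₁ * p n₂ m₂ ≤ p (n₁ + n₂) (m₁ + m₂)) :
    ∀ n₁ n₂, 1 ≤ n₁ → 1 ≤ n₂ →
      (∑ m ∈ Finset.range (B n₁ + 1), p n₁ m) *
        (∑ m ∈ Finset.range (B n₂ + 1), p n₂ m) ≤
      (1 + B n₂ - A n₂) * ∑ m ∈ Finset.range (B (n₁ + n₂) + 1), p (n₁ + n₂) m := by
  intro n₁ n₂ hn₁ hn₂
  rw [sum_range_eq_sum_Icc (f := p n₂) (A n₂) (B n₂) fun m hm => hzero n₂ hn₂ m (.inl hm)]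
  calc _ ≤ #(Icc (A n₂) (B n₂)) • ∑ m ∈ range (B (n₁ + n₂) + 1), p (n₁ + n₂) m :=
        sum_mul_sum_le_card_nsmul_sum (hsuper n₁ n₂ hn₁ hn₂)
          (fun m hm => hzero _ (by omega) m (.inr hm)) _ _
    _ = _ := by rw [Nat.card_Icc, smul_eq_mul, add_comm 1]

/-- Under Assumptions A, with `p_n^# = Σ_{m ≥ 0} p n m` (a finite sum, since
`p n m = 0` for `m > B n`), one has
`p_{n₁}^# · p_{n₂}^# ≤ (1 + B n₂ − A n₂) · p_{n₁+n₂}^#`. -/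
theorem psharp_supermultiplicative
    (p : ℕ → ℕ → ℕ) (A B : ℕ → ℕ) (K C : ℝ)
    (hK : 0 < K) (hpK : ∀ n, 1 ≤ n → ∀ m, (p n m : ℝ) ≤ K ^ n)
    (hC : 0 < C)
    (hABle : ∀ n, 1 ≤ n → A n ≤ B n)
    (hBC : ∀ n, 1 ≤ n → (B n : ℝ) ≤ C * n)
    (hpos : ∀ n, 1 ≤ n → ∀ m, A n ≤ m → m ≤ B n → 0 < p n m)
    (hzero : ∀ n, 1 ≤ n → ∀ m, (m < A n ∨ B n < m) → p n m = 0)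
    (hsuper : ∀ n₁ n₂, 1 ≤ n₁ → 1 ≤ n₂ → ∀ m₁ m₂,
      p n₁ m₁ * p n₂ m₂ ≤ p (n₁ + n₂) (m₁ + m₂)) :
    ∀ n₁ n₂, 1 ≤ n₁ → 1 ≤ n₂ →
      (∑ m ∈ Finset.range (B n₁ + 1), p n₁ m) *
        (∑ m ∈ Finset.range (B n₂ + 1), p n₂ m) ≤
      (1 + B n₂ - A n₂) * ∑ m ∈ Finset.range (B (n₁ + n₂) + 1), p (n₁ + n₂) m :=
  psharp_supermultiplicative_general p A B hzero hsuper
end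

section
/- Under Assumptions A, with p_n^# := Σ_{m ≥ 0} p_n(m), the limit log μ := lim_{n→∞} (1/n)·log p_n^# exists and is a finite real number. -/
open Filter Set Topology

/-!
The largest term `q n = max_m p n m` is supermultiplicative by (3) and at most `K ^ n`, so
Fekete's lemma gives a limit for `log (q n) / n`. Since `p n m` vanishes outside `[0, B n]`,
`q n ≤ p_n^# ≤ (B n + 1) q n`, and `log (B n + 1) / n → 0` because `B n` grows at most linearly.
-/

theorem exists_tendsto_div_of_superadditive {a : ℕ → ℝ}
    (hadd : ∀ m n, 1 ≤ m → 1 ≤ n → a m + a n ≤ a (m + n))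
    {c : ℝ} (hle : ∀ n, 1 ≤ n → a n ≤ n * c) :
    ∃ L, Tendsto (fun n : ℕ => a n / n) atTop (𝓝 L) := by
  -- Resetting the value at `0` makes `-a` subadditive without changing `a n / n`.
  set b : ℕ → ℝ := fun n => if n = 0 then 0 else -a n
  have hsub : Subadditive b := by
    intro m n
    rcases Nat.eq_zero_or_pos m with rfl | hm
    · simp [b]
    rcases Nat.eq_zero_or_pos n with rfl | hn
    · simp [b]
    simp only [b, if_neg hm.ne', if_neg hn.ne', if_neg (by omega : m + n ≠ 0)]
    linarith [hadd m n hm hn]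
  have hbdd : BddBelow (range fun n => b n / n) := by
    refine ⟨min (-c) 0, ?_⟩
    rintro _ ⟨n, rfl⟩
    rcases Nat.eq_zero_or_pos n with rfl | hn
    · simp [b]
    · refine min_le_of_left_le ?_
      simp only [b, if_neg hn.ne']
      rw [le_div_iff₀ (by exact_mod_cast hn)]
      linarith [hle n hn]
  refine ⟨-hsub.lim, (hsub.tendsto_lim hbdd).neg.congr fun n => ?_⟩
  rcases eq_or_ne n 0 with rfl | hn
  · simp [b]
  · simp [b, hn, neg_div]

theorem tendsto_log_add_one_div_of_le_mul {b : ℕ → ℕ} {C : ℝ}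
    (hb : ∀ n, 1 ≤ n → (b n : ℝ) ≤ C * n) :
    Tendsto (fun n : ℕ => Real.log (b n + 1) / n) atTop (𝓝 0) := by
  have hC : 0 < C + 1 := by
    have := hb 1 le_rfl
    rw [Nat.cast_one, mul_one] at this
    linarith [Nat.cast_nonneg (α := ℝ) (b 1)]
  have hlim : Tendsto (fun n : ℕ => Real.log ((C + 1) * n) / n) atTop (𝓝 0) := by
    have := (Real.tendsto_pow_log_div_mul_add_atTop (C + 1)⁻¹ 0 1 (inv_ne_zero hC.ne')).comp
      (tendsto_natCast_atTop_atTop.const_mul_atTop hC)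
    refine this.congr fun n => ?_
    simp [inv_mul_cancel_left₀ hC.ne']
  refine squeeze_zero' ?_ ?_ hlim <;> filter_upwards [eventually_ge_atTop 1] with n hn
  · exact div_nonneg (Real.log_nonneg (by simp)) n.cast_nonneg
  · have hn' : (1 : ℝ) ≤ n := by exact_mod_cast hn
    gcongr
    nlinarith [hb n hn]

def maxTerm (p : ℕ → ℕ → ℕ) (B : ℕ → ℕ) (n : ℕ) : ℕ :=
  (Finset.range (B n + 1)).sup (p n)

section maxTerm

variable {p : ℕ → ℕ → ℕ} {B : ℕ → ℕ}

theorem le_maxTerm_of_le {n m : ℕ} (hm : m ≤ B n) : p n m ≤ maxTerm p B n :=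
  Finset.le_sup (Finset.mem_range_succ_iff.mpr hm)

theorem le_maxTerm {n : ℕ} (hzero : ∀ m, B n < m → p n m = 0) (m : ℕ) :
    p n m ≤ maxTerm p B n := by
  rcases le_or_gt m (B n) with hm | hm
  · exact le_maxTerm_of_le hm
  · simp [hzero m hm]

theorem exists_le_eq_maxTerm (n : ℕ) : ∃ m ≤ B n, p n m = maxTerm p B n := by
  obtain ⟨m, hm, heq⟩ := Finset.exists_mem_eq_sup _ Finset.nonempty_range_add_one (p n)
  exact ⟨m, Finset.mem_range_succ_iff.mp hm, heq.symm⟩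

theorem maxTerm_le_sum (n : ℕ) : maxTerm p B n ≤ ∑ m ∈ Finset.range (B n + 1), p n m :=
  Finset.sup_le fun _ hm => Finset.single_le_sum (fun _ _ => Nat.zero_le _) hm

theorem sum_le_mul_maxTerm (n : ℕ) :
    ∑ m ∈ Finset.range (B n + 1), p n m ≤ (B n + 1) * maxTerm p B n := by
  simpa using Finset.sum_le_card_nsmul (Finset.range (B n + 1)) (p n) (maxTerm p B n)
    fun _ hm => Finset.le_sup (f := p n) hm

theorem maxTerm_mul_le {n₁ n₂ : ℕ}
    (hsuper : ∀ m₁ m₂, p n₁ m₁ * p n₂ m₂ ≤ p (n₁ + n₂) (m₁ + m₂))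
    (hzero : ∀ m, B (n₁ + n₂) < m → p (n₁ + n₂) m = 0) :
    maxTerm p B n₁ * maxTerm p B n₂ ≤ maxTerm p B (n₁ + n₂) := by
  obtain ⟨m₁, -, h₁⟩ := exists_le_eq_maxTerm (p := p) (B := B) n₁
  obtain ⟨m₂, -, h₂⟩ := exists_le_eq_maxTerm (p := p) (B := B) n₂
  rw [← h₁, ← h₂]
  exact (hsuper m₁ m₂).trans (le_maxTerm hzero _)

theorem tendsto_log_sum_sub_log_maxTerm_div {C : ℝ}
    (hpos : ∀ n, 1 ≤ n → 0 < maxTerm p B n) (hB : ∀ n, 1 ≤ n → (B n : ℝ) ≤ C * n) :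
    Tendsto (fun n : ℕ => (Real.log (∑ m ∈ Finset.range (B n + 1), p n m)
      - Real.log (maxTerm p B n)) / n) atTop (𝓝 0) := by
  refine squeeze_zero' ?_ ?_ (tendsto_log_add_one_div_of_le_mul hB) <;>
    filter_upwards [eventually_ge_atTop 1] with n hn
  all_goals
    have hq : (0 : ℝ) < maxTerm p B n := by exact_mod_cast hpos n hn
    have hqS : (maxTerm p B n : ℝ) ≤ ∑ m ∈ Finset.range (B n + 1), (p n m : ℝ) := by
      exact_mod_cast maxTerm_le_sum n
  · exact div_nonneg (sub_nonneg.mpr (Real.log_le_log hq hqS)) n.cast_nonneg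
  · have hSq : ∑ m ∈ Finset.range (B n + 1), (p n m : ℝ) ≤ (B n + 1) * maxTerm p B n := by
      exact_mod_cast sum_le_mul_maxTerm n
    gcongr
    rw [sub_le_iff_le_add, ← Real.log_mul (by positivity) hq.ne']
    exact Real.log_le_log (hq.trans_le hqS) hSq

end maxTerm

theorem growth_constant_exists_general
    (p : ℕ → ℕ → ℕ) (A B : ℕ → ℕ) (K C : ℝ)
    (hpK : ∀ n, 1 ≤ n → ∀ m, (p n m : ℝ) ≤ K ^ n)
    (hABle : ∀ n, 1 ≤ n → A n ≤ B n)
    (hBC : ∀ n, 1 ≤ n → (B n : ℝ) ≤ C * n)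
    (hpos : ∀ n, 1 ≤ n → ∀ m, A n ≤ m → m ≤ B n → 0 < p n m)
    (hzero : ∀ n, 1 ≤ n → ∀ m, (m < A n ∨ B n < m) → p n m = 0)
    (hsuper : ∀ n₁ n₂, 1 ≤ n₁ → 1 ≤ n₂ → ∀ m₁ m₂,
      p n₁ m₁ * p n₂ m₂ ≤ p (n₁ + n₂) (m₁ + m₂)) :
    ∃ logμ : ℝ,
      Tendsto (fun n : ℕ =>
          Real.log (∑ m ∈ Finset.range (B n + 1), p n m) / n)
        atTop (nhds logμ) := by
  have hq : ∀ n, 1 ≤ n → 0 < maxTerm p B n := fun n hn =>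
    (hpos n hn _ le_rfl (hABle n hn)).trans_le (le_maxTerm_of_le (hABle n hn))
  have hq' : ∀ n, 1 ≤ n → (0 : ℝ) < maxTerm p B n := fun n hn => by exact_mod_cast hq n hn
  have hadd : ∀ m n, 1 ≤ m → 1 ≤ n → Real.log (maxTerm p B m) + Real.log (maxTerm p B n)
      ≤ Real.log (maxTerm p B (m + n)) := fun m n hm hn => by
    rw [← Real.log_mul (hq' m hm).ne' (hq' n hn).ne']
    refine Real.log_le_log (mul_pos (hq' m hm) (hq' n hn)) ?_
    exact_mod_cast maxTerm_mul_le (hsuper m n hm hn) fun k hk =>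
      hzero (m + n) (by omega) k (Or.inr hk)
  have hle : ∀ n, 1 ≤ n → Real.log (maxTerm p B n) ≤ n * Real.log K := fun n hn => by
    obtain ⟨m, -, hm⟩ := exists_le_eq_maxTerm (p := p) (B := B) n
    rw [← Real.log_pow, ← hm]
    exact Real.log_le_log (hm ▸ hq' n hn) (hpK n hn m)
  obtain ⟨L, hL⟩ := exists_tendsto_div_of_superadditive
    (a := fun n => Real.log (maxTerm p B n)) hadd hle
  have hlim := hL.add (tendsto_log_sum_sub_log_maxTerm_div hq hBC)
  rw [add_zero] at hlim
  refine ⟨L, hlim.congr fun n => ?_⟩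
  rw [← add_div, add_sub_cancel]

/-- Under Assumptions A, with `p_n^# = Σ_{m ≥ 0} p n m` (a finite sum, since
`p n m = 0` for `m > B n`), the limit `log μ = lim (1/n)·log p_n^#` exists
and is a finite real number. -/
theorem growth_constant_exists
    (p : ℕ → ℕ → ℕ) (A B : ℕ → ℕ) (K C : ℝ)
    (hK : 0 < K) (hpK : ∀ n, 1 ≤ n → ∀ m, (p n m : ℝ) ≤ K ^ n)
    (hC : 0 < C)
    (hABle : ∀ n, 1 ≤ n → A n ≤ B n)
    (hBC : ∀ n, 1 ≤ n → (B n : ℝ) ≤ C * n)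
    (hpos : ∀ n, 1 ≤ n → ∀ m, A n ≤ m → m ≤ B n → 0 < p n m)
    (hzero : ∀ n, 1 ≤ n → ∀ m, (m < A n ∨ B n < m) → p n m = 0)
    (hsuper : ∀ n₁ n₂, 1 ≤ n₁ → 1 ≤ n₂ → ∀ m₁ m₂,
      p n₁ m₁ * p n₂ m₂ ≤ p (n₁ + n₂) (m₁ + m₂)) :
    ∃ logμ : ℝ,
      Tendsto (fun n : ℕ =>
          Real.log (∑ m ∈ Finset.range (B n + 1), p n m) / n)
        atTop (nhds logμ) :=
  growth_constant_exists_general p A B K C hpK hABle hBC hpos hzero hsuper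
end

section
/- Under Assumptions A with ε_m < ε_M, for every ε ∈ (ε_m, ε_M) the limit log 𝒫(ε) := lim_{n→∞} (1/n)·log p_n(⌊εn⌋) exists as a finite real number. -/
open Filter Set

/-- Under Assumptions A with `ε_m < ε_M`, for every `ε ∈ (ε_m, ε_M)` the limit
`log 𝒫(ε) = lim (1/n) log p n ⌊εn⌋` exists as a finite real number. -/
theorem theorem_3_4
    (p : ℕ → ℕ → ℕ) (A B : ℕ → ℕ) (K C : ℝ)
    (hK : 0 < K) (hpK : ∀ n, 1 ≤ n → ∀ m, (p n m : ℝ) ≤ K ^ n)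
    (hC : 0 < C)
    (hABle : ∀ n, 1 ≤ n → A n ≤ B n)
    (hBC : ∀ n, 1 ≤ n → (B n : ℝ) ≤ C * n)
    (hpos : ∀ n, 1 ≤ n → ∀ m, A n ≤ m → m ≤ B n → 0 < p n m)
    (hzero : ∀ n, 1 ≤ n → ∀ m, (m < A n ∨ B n < m) → p n m = 0)
    (hsuper : ∀ n₁ n₂, 1 ≤ n₁ → 1 ≤ n₂ → ∀ m₁ m₂,
      p n₁ m₁ * p n₂ m₂ ≤ p (n₁ + n₂) (m₁ + m₂))
    (εm εM : ℝ)
    (hεm : Tendsto (fun n : ℕ => (A n : ℝ) / n) atTop (nhds εm))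
    (hεM : Tendsto (fun n : ℕ => (B n : ℝ) / n) atTop (nhds εM))
    (hlt : εm < εM) :
    ∀ ε ∈ Set.Ioo εm εM,
      ∃ logP : ℝ,
        Tendsto (fun n : ℕ => Real.log (p n ⌊ε * n⌋₊) / n) atTop (nhds logP) := by
  intro ε hε
  obtain ⟨hεmε, hεεM⟩ := hε
  -- εm ≥ 0, hence ε > 0
  have hεm0 : 0 ≤ εm :=
    ge_of_tendsto' hεm (fun n => div_nonneg (Nat.cast_nonneg _) (Nat.cast_nonneg _))
  have hε0 : 0 < ε := lt_of_le_of_lt hεm0 hεmε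
  -- K ≥ 1
  have hK1 : (1:ℝ) ≤ K := by
    have h1 : (1:ℝ) ≤ (p 1 (A 1) : ℝ) := by
      have := hpos 1 le_rfl (A 1) le_rfl (hABle 1 le_rfl)
      exact_mod_cast this
    have h2 := hpK 1 le_rfl (A 1)
    rw [pow_one] at h2
    linarith
  have hlogK0 : 0 ≤ Real.log K := Real.log_nonneg hK1
  set a : ℕ → ℝ := fun n => Real.log (p n ⌊ε * n⌋₊) with ha_def
  -- eventual window facts
  have hA_ev : ∀ᶠ n : ℕ in atTop, (A n : ℝ) / n < ε :=
    hεm.eventually_lt tendsto_const_nhds hεmε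
  have h3n : Tendsto (fun n : ℕ => ε + 3 / (n:ℝ)) atTop (nhds ε) := by
    have : Tendsto (fun n : ℕ => ε + 3 / (n:ℝ)) atTop (nhds (ε + 0)) :=
      tendsto_const_nhds.add (tendsto_const_nhds.div_atTop
        (tendsto_natCast_atTop_atTop))
    simpa using this
  have hB_ev : ∀ᶠ n : ℕ in atTop, ε + 3 / (n:ℝ) < (B n : ℝ) / n :=
    h3n.eventually_lt hεM hεεM
  obtain ⟨N₀, hN₀⟩ := eventually_atTop.mp (hA_ev.and hB_ev)
  set N₁ : ℕ := max N₀ 1 with hN₁_def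
  have hN₁1 : 1 ≤ N₁ := le_max_right _ _
  -- the window property
  have hwin : ∀ n, N₁ ≤ n → A n ≤ ⌊ε * n⌋₊ ∧ ⌊ε * n⌋₊ + 2 ≤ B n := by
    intro n hn
    have hn1 : 1 ≤ n := le_trans hN₁1 hn
    have hnpos : (0:ℝ) < n := by exact_mod_cast hn1
    obtain ⟨h1, h2⟩ := hN₀ n (le_trans (le_max_left _ _) hn)
    constructor
    · apply Nat.le_floor
      have : (A n : ℝ) < ε * n := by
        have := (div_lt_iff₀ hnpos).mp h1
        linarith
      linarith
    · have hf : (⌊ε * n⌋₊ : ℝ) ≤ ε * n :=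
        Nat.floor_le (by positivity)
      have h2' : ε * n + 3 < (B n : ℝ) := by
        have h := mul_lt_mul_of_pos_right h2 hnpos
        rw [add_mul, div_mul_cancel₀ _ (ne_of_gt hnpos), div_mul_cancel₀ _ (ne_of_gt hnpos)] at h
        exact h
      have : ((⌊ε * n⌋₊ + 2 : ℕ) : ℝ) < (B n : ℝ) := by push_cast; linarith
      exact_mod_cast this.le
  -- positivity on the window
  have hp1 : ∀ n, N₁ ≤ n → ∀ d, d ≤ 2 → 1 ≤ p n (⌊ε * n⌋₊ + d) := by
    intro n hn d hd
    have hn1 : 1 ≤ n := le_trans hN₁1 hn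
    obtain ⟨h1, h2⟩ := hwin n hn
    exact hpos n hn1 _ (le_trans h1 (Nat.le_add_right _ _)) (by omega)
  -- natural-number superadditivity with shift N₁
  have hsupN : ∀ n1 n2, N₁ ≤ n1 → N₁ ≤ n2 →
      p n1 ⌊ε * n1⌋₊ * p n2 ⌊ε * n2⌋₊ ≤ p (n1 + n2 + N₁) ⌊ε * ((n1:ℕ) + n2 + N₁ : ℕ)⌋₊ := by
    intro n1 n2 h1 h2
    set s := n1 + n2 + N₁ with hs
    have hfl_lo : ⌊ε * n1⌋₊ + ⌊ε * n2⌋₊ + ⌊ε * N₁⌋₊ ≤ ⌊ε * (s:ℕ)⌋₊ := by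
      apply Nat.le_floor
      have e1 : (⌊ε * n1⌋₊ : ℝ) ≤ ε * n1 := Nat.floor_le (by positivity)
      have e2 : (⌊ε * n2⌋₊ : ℝ) ≤ ε * n2 := Nat.floor_le (by positivity)
      have e3 : (⌊ε * N₁⌋₊ : ℝ) ≤ ε * N₁ := Nat.floor_le (by positivity)
      push_cast [hs]
      nlinarith
    have hfl_hi : ⌊ε * (s:ℕ)⌋₊ ≤ ⌊ε * n1⌋₊ + ⌊ε * n2⌋₊ + ⌊ε * N₁⌋₊ + 2 := by
      have e0 : (⌊ε * (s:ℕ)⌋₊ : ℝ) ≤ ε * (s:ℕ) := Nat.floor_le (by positivity)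
      have e1 : ε * n1 < ⌊ε * n1⌋₊ + 1 := Nat.lt_floor_add_one _
      have e2 : ε * n2 < ⌊ε * n2⌋₊ + 1 := Nat.lt_floor_add_one _
      have e3 : ε * N₁ < ⌊ε * N₁⌋₊ + 1 := Nat.lt_floor_add_one _
      have hcl : (⌊ε * (s:ℕ)⌋₊ : ℝ) < ((⌊ε * n1⌋₊ + ⌊ε * n2⌋₊ + ⌊ε * N₁⌋₊ + 3 : ℕ) : ℝ) := by
        have hse : ε * ((s:ℕ):ℝ) = ε * n1 + ε * n2 + ε * N₁ := by
          have : ((s:ℕ):ℝ) = (n1:ℝ) + n2 + N₁ := by push_cast [hs]; ring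
          rw [this]; ring
        push_cast
        linarith [e0, e1, e2, e3, hse.le, hse.ge]
      have := Nat.cast_lt.mp hcl
      omega
    set m₀ : ℕ := ⌊ε * (s:ℕ)⌋₊ - ⌊ε * n1⌋₊ - ⌊ε * n2⌋₊ with hm₀
    have hm₀lo : ⌊ε * N₁⌋₊ ≤ m₀ := by omega
    have hm₀hi : m₀ ≤ ⌊ε * N₁⌋₊ + 2 := by omega
    have hpm₀ : 1 ≤ p N₁ m₀ := by
      obtain ⟨hA1, hB1⟩ := hwin N₁ le_rfl
      exact hpos N₁ hN₁1 m₀ (le_trans hA1 hm₀lo) (by omega)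
    have harg : ⌊ε * (s:ℕ)⌋₊ = (⌊ε * n1⌋₊ + ⌊ε * n2⌋₊) + m₀ := by omega
    calc p n1 ⌊ε * n1⌋₊ * p n2 ⌊ε * n2⌋₊
        = p n1 ⌊ε * n1⌋₊ * p n2 ⌊ε * n2⌋₊ * 1 := by ring
      _ ≤ p (n1 + n2) (⌊ε * n1⌋₊ + ⌊ε * n2⌋₊) * p N₁ m₀ := by
          exact Nat.mul_le_mul
            (hsuper n1 n2 (le_trans hN₁1 h1) (le_trans hN₁1 h2) _ _) hpm₀
      _ ≤ p (n1 + n2 + N₁) ((⌊ε * n1⌋₊ + ⌊ε * n2⌋₊) + m₀) := by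
          exact hsuper (n1 + n2) N₁ (by omega) hN₁1 _ _
      _ = p s ⌊ε * (s:ℕ)⌋₊ := by rw [harg]
  -- real-level
  have ha0 : ∀ n, N₁ ≤ n → 0 ≤ a n := by
    intro n hn
    apply Real.log_nonneg
    exact_mod_cast hp1 n hn 0 (by omega)
  have haa : ∀ n1 n2, N₁ ≤ n1 → N₁ ≤ n2 → a n1 + a n2 ≤ a (n1 + n2 + N₁) := by
    intro n1 n2 h1 h2
    have hp1' : (0:ℝ) < p n1 ⌊ε * n1⌋₊ := by exact_mod_cast hp1 n1 h1 0 (by omega)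
    have hp2' : (0:ℝ) < p n2 ⌊ε * n2⌋₊ := by exact_mod_cast hp1 n2 h2 0 (by omega)
    have hmul : (p n1 ⌊ε * n1⌋₊ * p n2 ⌊ε * n2⌋₊ : ℝ)
        ≤ (p (n1 + n2 + N₁) ⌊ε * ((n1:ℕ) + n2 + N₁ : ℕ)⌋₊ : ℝ) := by
      exact_mod_cast hsupN n1 n2 h1 h2
    have hll := Real.log_le_log (by positivity) hmul
    rw [Real.log_mul (ne_of_gt hp1') (ne_of_gt hp2')] at hll
    exact hll
  have haK : ∀ n, N₁ ≤ n → a n ≤ n * Real.log K := by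
    intro n hn
    have hn1 : 1 ≤ n := le_trans hN₁1 hn
    have hpp : (0:ℝ) < p n ⌊ε * n⌋₊ := by exact_mod_cast hp1 n hn 0 (by omega)
    have := Real.log_le_log hpp (hpK n hn1 _)
    rwa [Real.log_pow] at this
  -- the sup
  set S : Set ℝ := (fun k : ℕ => a k / (k + N₁)) '' {k | N₁ ≤ k} with hS_def
  have hSne : S.Nonempty := ⟨_, ⟨N₁, Set.mem_setOf.mpr le_rfl, rfl⟩⟩
  have hSbdd : BddAbove S := by
    refine ⟨Real.log K, ?_⟩
    rintro x ⟨k, hk, rfl⟩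
    have hk0 : (0:ℝ) < (k:ℝ) + N₁ := by
      have : (1:ℝ) ≤ (k:ℝ) := by exact_mod_cast le_trans hN₁1 hk
      positivity
    rw [div_le_iff₀ hk0]
    have h1 : a k ≤ k * Real.log K := haK k hk
    have h2 : (k:ℝ) * Real.log K ≤ ((k:ℝ) + N₁) * Real.log K := by
      apply mul_le_mul_of_nonneg_right _ hlogK0
      linarith [Nat.cast_nonneg (α := ℝ) N₁]
    linarith [mul_comm (Real.log K) ((k:ℝ) + N₁)]
  set L : ℝ := sSup S with hL_def
  have hmemL : ∀ k, N₁ ≤ k → a k / (k + N₁) ≤ L := by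
    intro k hk
    exact le_csSup hSbdd ⟨k, Set.mem_setOf.mpr hk, rfl⟩
  have hL0 : 0 ≤ L := by
    have := hmemL N₁ le_rfl
    have h0 : 0 ≤ a N₁ / ((N₁:ℝ) + N₁) := by
      apply div_nonneg (ha0 N₁ le_rfl)
      positivity
    linarith
  have hub : ∀ n, N₁ ≤ n → a n ≤ L * ((n:ℝ) + N₁) := by
    intro n hn
    have hn0 : (0:ℝ) < (n:ℝ) + N₁ := by
      have : (1:ℝ) ≤ (n:ℝ) := by exact_mod_cast le_trans hN₁1 hn
      positivity
    have := hmemL n hn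
    calc a n = a n / ((n:ℝ) + N₁) * ((n:ℝ) + N₁) := by field_simp
      _ ≤ L * ((n:ℝ) + N₁) := mul_le_mul_of_nonneg_right this hn0.le
  refine ⟨L, ?_⟩
  rw [tendsto_order]
  constructor
  · -- lower bound: ∀ b < L, eventually b < a n / n
    intro b hbL
    rcases lt_or_ge b 0 with hb0 | hb0
    · filter_upwards [eventually_ge_atTop N₁] with n hn
      have hn1 : (0:ℝ) < n := by
        have : 1 ≤ n := le_trans hN₁1 hn
        exact_mod_cast this
      have : 0 ≤ a n / n := div_nonneg (ha0 n hn) hn1.le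
      linarith
    · obtain ⟨x, hxS, hbx⟩ := exists_lt_of_lt_csSup hSne hbL
      obtain ⟨k, hk, rfl⟩ := hxS
      set c : ℝ := a k / (k + N₁) with hc_def
      have hkN0 : (0:ℝ) < (k:ℝ) + N₁ := by
        have : (1:ℝ) ≤ (k:ℝ) := by exact_mod_cast le_trans hN₁1 hk
        positivity
      have hc0 : 0 ≤ c := le_trans hb0 hbx.le
      have hak0 : 0 ≤ a k := by
        have := (div_nonneg_iff.mp (le_trans hb0 hbx.le))
        exact ha0 k hk
      set D : ℕ := N₁ + k + N₁ with hD_def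
      -- chain lemma
      have hchain : ∀ q : ℕ, ∀ r, N₁ ≤ r → (q:ℝ) * a k + a r ≤ a (q * (k + N₁) + r) := by
        intro q
        induction q with
        | zero => intro r hr; simp
        | succ q ih =>
          intro r hr
          have hidx : (q + 1) * (k + N₁) + r = k + (q * (k + N₁) + r) + N₁ := by ring
          have h1 : a k + a (q * (k + N₁) + r) ≤ a ((q+1) * (k + N₁) + r) := by
            rw [hidx]
            exact haa k _ hk (le_trans hr (by omega))
          have h2 := ih r hr
          push_cast
          linarith
      -- eventual bound
      have htend : Tendsto (fun n : ℕ => c * (1 - (D:ℝ) / n)) atTop (nhds c) := by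
        have : Tendsto (fun n : ℕ => c * (1 - (D:ℝ) / n)) atTop (nhds (c * (1 - 0))) := by
          apply Tendsto.mul tendsto_const_nhds
          exact tendsto_const_nhds.sub (tendsto_const_nhds.div_atTop tendsto_natCast_atTop_atTop)
        simpa using this
      have hev : ∀ᶠ n : ℕ in atTop, b < c * (1 - (D:ℝ) / n) :=
        tendsto_const_nhds.eventually_lt htend hbx
      filter_upwards [hev, eventually_ge_atTop N₁] with n hn hnN
      have hn1 : (0:ℝ) < n := by
        have : 1 ≤ n := le_trans hN₁1 hnN
        exact_mod_cast this
      set q : ℕ := (n - N₁) / (k + N₁) with hq_def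
      set r : ℕ := n - q * (k + N₁) with hr_def
      have hdm : q * (k + N₁) + (n - N₁) % (k + N₁) = n - N₁ := by
        rw [mul_comm]; exact Nat.div_add_mod _ _
      have hmlt : (n - N₁) % (k + N₁) < k + N₁ := Nat.mod_lt _ (by omega)
      have hqr : q * (k + N₁) + r = n := by omega
      have hrN : N₁ ≤ r := by omega
      have hrD : r ≤ D := by omega
      have hkey : (q:ℝ) * a k ≤ a n := by
        have := hchain q r hrN
        rw [hqr] at this
        linarith [ha0 r hrN]
      -- q ≥ (n - D)/(k+N₁)
      have hqreal : ((n:ℝ) - D) / ((k:ℝ) + N₁) ≤ (q:ℝ) := by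
        rw [div_le_iff₀ hkN0]
        have hcast : (q:ℝ) * ((k:ℝ) + N₁) + r = n := by exact_mod_cast hqr
        have : (r:ℝ) ≤ D := by exact_mod_cast hrD
        linarith
      have hfin : c * (1 - (D:ℝ) / n) ≤ a n / n := by
        have h1 : ((n:ℝ) - D) / ((k:ℝ) + N₁) * a k ≤ (q:ℝ) * a k :=
          mul_le_mul_of_nonneg_right hqreal hak0
        have h2 : ((n:ℝ) - D) / ((k:ℝ) + N₁) * a k ≤ a n := le_trans h1 hkey
        have heq : c * (1 - (D:ℝ) / n) = (((n:ℝ) - D) / ((k:ℝ) + N₁) * a k) / n := by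
          rw [hc_def]
          field_simp
        rw [heq]
        have := mul_le_mul_of_nonneg_right h2 (inv_nonneg.mpr hn1.le)
        simpa [div_eq_mul_inv] using this
      linarith
  · -- upper bound: ∀ b > L, eventually a n / n < b
    intro b hLb
    have htend : Tendsto (fun n : ℕ => L + L * N₁ / n) atTop (nhds L) := by
      have : Tendsto (fun n : ℕ => L + L * N₁ / n) atTop (nhds (L + 0)) :=
        tendsto_const_nhds.add (tendsto_const_nhds.div_atTop tendsto_natCast_atTop_atTop)
      simpa using this
    have hev : ∀ᶠ n : ℕ in atTop, L + L * N₁ / n < b :=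
      htend.eventually_lt tendsto_const_nhds hLb
    filter_upwards [hev, eventually_ge_atTop N₁] with n hn hnN
    have hn1 : (0:ℝ) < n := by
      have : 1 ≤ n := le_trans hN₁1 hnN
      exact_mod_cast this
    have h1 : a n ≤ L * ((n:ℝ) + N₁) := hub n hnN
    have h2 : a n / n ≤ L + L * N₁ / n := by
      rw [div_le_iff₀ hn1]
      have : (L + L * N₁ / n) * n = L * ((n:ℝ) + N₁) := by field_simp
      rw [this]; exact h1
    linarith
end

section
/- Under Assumptions A with ε_m < ε_M, let ε ∈ (ε_m, ε_M) and let log 𝒫(ε) = lim_{n→∞} (1/n)·log p_n(⌊εn⌋). Then for every n ≥ 1 there exists η_n ∈ {0,1} such that p_n(⌊εn⌋ + η_n) ≤ 𝒫(ε)^n. -/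
open Filter Set

lemma pow_le_super_aux (p : ℕ → ℕ → ℕ)
    (hsuper : ∀ n₁ n₂, 1 ≤ n₁ → 1 ≤ n₂ → ∀ m₁ m₂,
      p n₁ m₁ * p n₂ m₂ ≤ p (n₁ + n₂) (m₁ + m₂))
    (n : ℕ) (hn : 1 ≤ n) (m : ℕ) :
    ∀ j, 1 ≤ j → p n m ^ j ≤ p (j * n) (j * m) := by
  intro j hj
  induction j with
  | zero => omega
  | succ j ih =>
    rcases Nat.eq_or_lt_of_le hj with h | h
    · simp [← h]
    · have hj1 : 1 ≤ j := by omega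
      have hjn : 1 ≤ j * n := Nat.one_le_iff_ne_zero.2 (by positivity)
      calc p n m ^ (j + 1) = p n m ^ j * p n m := pow_succ _ _
        _ ≤ p (j * n) (j * m) * p n m := Nat.mul_le_mul_right _ (ih hj1)
        _ ≤ p (j * n + n) (j * m + m) := hsuper _ _ hjn hn _ _
        _ = p ((j + 1) * n) ((j + 1) * m) := by ring_nf

/-- Under Assumptions A with `ε_m < ε_M`, for `ε ∈ (ε_m, ε_M)` with
`log 𝒫(ε) = lim (1/n) log p n ⌊εn⌋`, for every `n ≥ 1` there is `η_n ∈ {0,1}`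
with `p n (⌊εn⌋ + η_n) ≤ 𝒫(ε)^n`. -/
theorem theorem_3_4_bound
    (p : ℕ → ℕ → ℕ) (A B : ℕ → ℕ) (K C : ℝ)
    (hK : 0 < K) (hpK : ∀ n, 1 ≤ n → ∀ m, (p n m : ℝ) ≤ K ^ n)
    (hC : 0 < C)
    (hABle : ∀ n, 1 ≤ n → A n ≤ B n)
    (hBC : ∀ n, 1 ≤ n → (B n : ℝ) ≤ C * n)
    (hpos : ∀ n, 1 ≤ n → ∀ m, A n ≤ m → m ≤ B n → 0 < p n m)
    (hzero : ∀ n, 1 ≤ n → ∀ m, (m < A n ∨ B n < m) → p n m = 0)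
    (hsuper : ∀ n₁ n₂, 1 ≤ n₁ → 1 ≤ n₂ → ∀ m₁ m₂,
      p n₁ m₁ * p n₂ m₂ ≤ p (n₁ + n₂) (m₁ + m₂))
    (εm εM : ℝ)
    (hεm : Tendsto (fun n : ℕ => (A n : ℝ) / n) atTop (nhds εm))
    (hεM : Tendsto (fun n : ℕ => (B n : ℝ) / n) atTop (nhds εM))
    (hlt : εm < εM)
    (ε : ℝ) (hε : ε ∈ Set.Ioo εm εM) (logP : ℝ)
    (hP : Tendsto (fun n : ℕ => Real.log (p n ⌊ε * n⌋₊) / n) atTop (nhds logP)) :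
    ∀ n : ℕ, 1 ≤ n → ∃ η ∈ ({0, 1} : Set ℕ),
      (p n (⌊ε * n⌋₊ + η) : ℝ) ≤ (Real.exp logP) ^ n := by
  intro n hn
  set m := ⌊ε * n⌋₊ with hm
  by_cases hb : p n (m + 1) = 0
  · refine ⟨1, by simp, ?_⟩
    rw [hb]
    push_cast
    positivity
  by_cases ha : p n m = 0
  · refine ⟨0, by simp, ?_⟩
    rw [Nat.add_zero, ha]
    push_cast
    positivity
  -- main case: both positive
  set c := min (p n m) (p n (m + 1)) with hc
  have hc1 : 1 ≤ c := le_min (Nat.one_le_iff_ne_zero.2 ha) (Nat.one_le_iff_ne_zero.2 hb)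
  -- ε ≥ 0
  have hεm0 : 0 ≤ εm := ge_of_tendsto' hεm (fun k => by positivity)
  have hε0 : 0 ≤ ε := le_of_lt (lt_of_le_of_lt hεm0 hε.1)
  have hεn0 : 0 ≤ ε * n := by positivity
  have hmle : (m : ℝ) ≤ ε * n := Nat.floor_le hεn0
  have hmlt : ε * n < m + 1 := Nat.lt_floor_add_one _
  have hn0 : (0 : ℝ) < n := by exact_mod_cast hn
  -- key bound
  have key : ∀ k : ℕ, 1 ≤ k → c ^ k ≤ p (k * n) ⌊ε * (k * n : ℕ)⌋₊ := by
    intro k hk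
    have hk0 : (0 : ℝ) < k := by exact_mod_cast hk
    set M := ⌊ε * (k * n : ℕ)⌋₊ with hM
    have hkmM : k * m ≤ M := by
      apply Nat.le_floor
      push_cast
      calc (k : ℝ) * m ≤ k * (ε * n) := by nlinarith
        _ = ε * (k * n) := by ring
    have hMlt : M < k * (m + 1) := by
      have h1 : (M : ℝ) ≤ ε * (k * n : ℕ) := Nat.floor_le (by positivity)
      have h2 : ε * ((k : ℝ) * n) < k * (m + 1) := by nlinarith
      have : (M : ℝ) < (k * (m + 1) : ℕ) := by push_cast at h1 h2 ⊢; linarith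
      exact_mod_cast this
    have hMlt' : M < k * m + k := by
      have hkm : k * (m + 1) = k * m + k := by ring
      omega
    set r := M - k * m with hr
    have hMeq : M = k * m + r := by omega
    have hrk : r < k := by omega
    rcases Nat.eq_zero_or_pos r with hr0 | hr1
    · have : c ^ k ≤ p n m ^ k := Nat.pow_le_pow_left (min_le_left _ _) k
      calc c ^ k ≤ p n m ^ k := this
        _ ≤ p (k * n) (k * m) := pow_le_super_aux p hsuper n hn m k hk
        _ = p (k * n) M := by simp [hMeq, hr0]
    · set i := k - r with hi
      have hik : i + r = k := by omega
      have hi1 : 1 ≤ i := by omega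
      have hin : 1 ≤ i * n := Nat.one_le_iff_ne_zero.2 (by positivity)
      have hrn : 1 ≤ r * n := Nat.one_le_iff_ne_zero.2 (by positivity)
      calc c ^ k = c ^ i * c ^ r := by rw [← pow_add, hik]
        _ ≤ p n m ^ i * p n (m + 1) ^ r :=
            Nat.mul_le_mul (Nat.pow_le_pow_left (min_le_left _ _) i)
              (Nat.pow_le_pow_left (min_le_right _ _) r)
        _ ≤ p (i * n) (i * m) * p (r * n) (r * (m + 1)) :=
            Nat.mul_le_mul (pow_le_super_aux p hsuper n hn m i hi1)
              (pow_le_super_aux p hsuper n hn (m + 1) r hr1)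
        _ ≤ p (i * n + r * n) (i * m + r * (m + 1)) := hsuper _ _ hin hrn _ _
        _ = p (k * n) M := by
            congr 1
            · rw [← hik, Nat.add_mul]
            · have h1 : i * m + r * (m + 1) = (i + r) * m + r := by ring
              rw [h1, hik]; omega
  -- logarithmic bound
  have hclim : Real.log c / n ≤ logP := by
    have htend : Tendsto (fun k : ℕ => Real.log (p (k * n) ⌊ε * (k * n : ℕ)⌋₊) / ((k * n : ℕ) : ℝ))
        atTop (nhds logP) := by
      apply hP.comp
      exact tendsto_atTop_mono (fun k => Nat.le_mul_of_pos_right k hn) tendsto_id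
    apply ge_of_tendsto htend
    filter_upwards [eventually_ge_atTop 1] with k hk
    have hkey := key k hk
    have hk0 : (0 : ℝ) < k := by exact_mod_cast hk
    have hc0 : (0 : ℝ) < c := by exact_mod_cast hc1
    have hckpos : (0 : ℝ) < (c : ℝ) ^ k := by positivity
    have hcast : ((c : ℝ)) ^ k ≤ (p (k * n) ⌊ε * (k * n : ℕ)⌋₊ : ℝ) := by
      exact_mod_cast hkey
    have hlog : Real.log ((c : ℝ) ^ k) ≤ Real.log (p (k * n) ⌊ε * (k * n : ℕ)⌋₊) :=
      Real.log_le_log hckpos hcast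
    rw [Real.log_pow] at hlog
    have hknpos : (0 : ℝ) < ((k * n : ℕ) : ℝ) := by
      have : 0 < k * n := Nat.mul_pos hk hn
      exact_mod_cast this
    rw [div_le_div_iff₀ hn0 hknpos]
    have h2 : (k : ℝ) * Real.log c * n ≤ Real.log (p (k * n) ⌊ε * (k * n : ℕ)⌋₊) * n :=
      mul_le_mul_of_nonneg_right hlog hn0.le
    have h3 : Real.log (c : ℝ) * ((k * n : ℕ) : ℝ) = (k : ℝ) * Real.log c * n := by
      push_cast; ring
    linarith
  -- conclude
  have hc0 : (0 : ℝ) < c := by exact_mod_cast hc1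
  have hcle : (c : ℝ) ≤ Real.exp logP ^ n := by
    have h1 : Real.log c ≤ n * logP := by
      rw [div_le_iff₀ hn0] at hclim; linarith
    calc (c : ℝ) = Real.exp (Real.log c) := (Real.exp_log hc0).symm
      _ ≤ Real.exp (n * logP) := Real.exp_le_exp.2 h1
      _ = Real.exp logP ^ n := by rw [← Real.exp_nat_mul]
  by_cases hab : p n m ≤ p n (m + 1)
  · refine ⟨0, by simp, ?_⟩
    rw [Nat.add_zero]
    have : c = p n m := min_eq_left hab
    rw [← this]; exact hcle
  · refine ⟨1, by simp, ?_⟩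
    have : c = p n (m + 1) := min_eq_right (le_of_not_ge hab)
    rw [← this]; exact hcle
end

section
/- Under Assumptions A with ε_m < ε_M, let ε ∈ (ε_m, ε_M) and let m ≥ 1 be such that A_m ≤ ⌊εm⌋ and ⌊εm⌋ + 1 ≤ B_m. Then liminf_{n→∞} (1/n)·log p_n(⌊εn⌋) ≥ (1/m)·min{ log p_m(⌊εm⌋), log p_m(⌊εm⌋+1) }. -/
set_option maxHeartbeats 1000000

open Filter Set

lemma aux_pow_le (p : ℕ → ℕ → ℕ) (m a : ℕ) (hm : 1 ≤ m)
    (hsuper : ∀ n₁ n₂, 1 ≤ n₁ → 1 ≤ n₂ → ∀ m₁ m₂,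
      p n₁ m₁ * p n₂ m₂ ≤ p (n₁ + n₂) (m₁ + m₂)) :
    ∀ k, 1 ≤ k → ∀ t, k * a ≤ t → t ≤ k * a + k →
      (min (p m a) (p m (a + 1))) ^ k ≤ p (k * m) t := by
  intro k
  induction k with
  | zero => omega
  | succ k ih =>
    intro _ t h1 h2
    rcases Nat.eq_zero_or_pos k with hk | hk
    · subst hk
      have : t = a ∨ t = a + 1 := by omega
      rcases this with rfl | rfl
      · simpa using min_le_left (p m a) (p m (a + 1))
      · simpa using min_le_right (p m a) (p m (a + 1))
    · have e1 : (k + 1) * a = k * a + a := by ring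
      by_cases hc : t ≤ k * a + k + a
      · have ht' : k * a ≤ t - a ∧ t - a ≤ k * a + k ∧ (t - a) + a = t := by omega
        calc (min (p m a) (p m (a+1))) ^ (k+1)
            = (min (p m a) (p m (a+1))) ^ k * (min (p m a) (p m (a+1))) := pow_succ _ _
          _ ≤ p (k * m) (t - a) * p m a :=
              Nat.mul_le_mul (ih hk (t - a) ht'.1 ht'.2.1) (min_le_left _ _)
          _ ≤ p (k * m + m) ((t - a) + a) :=
              hsuper (k * m) m (by nlinarith) hm _ _
          _ = p ((k + 1) * m) t := by rw [ht'.2.2]; ring_nf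
      · have ht' : k * a ≤ t - (a+1) ∧ t - (a+1) ≤ k * a + k ∧ (t - (a+1)) + (a+1) = t := by
          omega
        calc (min (p m a) (p m (a+1))) ^ (k+1)
            = (min (p m a) (p m (a+1))) ^ k * (min (p m a) (p m (a+1))) := pow_succ _ _
          _ ≤ p (k * m) (t - (a+1)) * p m (a+1) :=
              Nat.mul_le_mul (ih hk _ ht'.1 ht'.2.1) (min_le_right _ _)
          _ ≤ p (k * m + m) ((t - (a+1)) + (a+1)) :=
              hsuper (k * m) m (by nlinarith) hm _ _
          _ = p ((k + 1) * m) t := by rw [ht'.2.2]; ring_nf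

/-- Under Assumptions A with `ε_m < ε_M`, for `ε ∈ (ε_m, ε_M)` and `m ≥ 1` with
`A m ≤ ⌊εm⌋` and `⌊εm⌋ + 1 ≤ B m`, one has
`liminf (1/n) log p n ⌊εn⌋ ≥ (1/m) min{log p m ⌊εm⌋, log p m (⌊εm⌋+1)}`. -/
theorem liminf_lower_bound
    (p : ℕ → ℕ → ℕ) (A B : ℕ → ℕ) (K C : ℝ)
    (hK : 0 < K) (hpK : ∀ n, 1 ≤ n → ∀ m, (p n m : ℝ) ≤ K ^ n)
    (hC : 0 < C)
    (hABle : ∀ n, 1 ≤ n → A n ≤ B n)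
    (hBC : ∀ n, 1 ≤ n → (B n : ℝ) ≤ C * n)
    (hpos : ∀ n, 1 ≤ n → ∀ m, A n ≤ m → m ≤ B n → 0 < p n m)
    (hzero : ∀ n, 1 ≤ n → ∀ m, (m < A n ∨ B n < m) → p n m = 0)
    (hsuper : ∀ n₁ n₂, 1 ≤ n₁ → 1 ≤ n₂ → ∀ m₁ m₂,
      p n₁ m₁ * p n₂ m₂ ≤ p (n₁ + n₂) (m₁ + m₂))
    (εm εM : ℝ)
    (hεm : Tendsto (fun n : ℕ => (A n : ℝ) / n) atTop (nhds εm))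
    (hεM : Tendsto (fun n : ℕ => (B n : ℝ) / n) atTop (nhds εM))
    (hlt : εm < εM)
    (ε : ℝ) (hε : ε ∈ Set.Ioo εm εM)
    (m : ℕ) (hm : 1 ≤ m) (hAm : A m ≤ ⌊ε * m⌋₊) (hBm : ⌊ε * m⌋₊ + 1 ≤ B m) :
    (1 / (m : ℝ)) * min (Real.log (p m ⌊ε * m⌋₊)) (Real.log (p m (⌊ε * m⌋₊ + 1)))
      ≤ Filter.liminf (fun n : ℕ => Real.log (p n ⌊ε * n⌋₊) / n) atTop := by
  set a := ⌊ε * m⌋₊ with ha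
  set q := min (p m a) (p m (a + 1)) with hq
  have hq1 : 1 ≤ q :=
    le_min (hpos m hm a hAm (by omega)) (hpos m hm (a + 1) (by omega) hBm)
  -- basic positivity facts
  have hεm0 : 0 ≤ εm := by
    refine ge_of_tendsto hεm ?_
    filter_upwards with n
    positivity
  have hε0 : 0 < ε := lt_of_le_of_lt hεm0 hε.1
  have hm0 : (0:ℝ) < m := by exact_mod_cast hm
  have haε : (a : ℝ) ≤ ε * m := Nat.floor_le (by positivity)
  have haε2 : ε * m < (a : ℝ) + 1 := by exact_mod_cast Nat.lt_floor_add_one (ε * m)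
  have hlogq : 0 ≤ Real.log q := Real.log_natCast_nonneg q
  -- choose N0
  have hev : ∀ᶠ n : ℕ in atTop, (A n : ℝ) + 2 ≤ ε * n ∧ ε * n + 2 ≤ B n := by
    have h1 : ∀ᶠ n : ℕ in atTop, (A n : ℝ) / n < (εm + ε) / 2 :=
      hεm.eventually_lt_const (by linarith [hε.1])
    have h2 : ∀ᶠ n : ℕ in atTop, (ε + εM) / 2 < (B n : ℝ) / n :=
      hεM.eventually_const_lt (by linarith [hε.2])
    have h3 : ∀ᶠ n : ℕ in atTop, (4 / (ε - εm) : ℝ) ≤ n ∧ (4 / (εM - ε) : ℝ) ≤ n ∧ 1 ≤ n := by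
      have t1 := tendsto_natCast_atTop_atTop (R := ℝ)
      filter_upwards [t1.eventually_ge_atTop (4 / (ε - εm)),
        t1.eventually_ge_atTop (4 / (εM - ε)), eventually_ge_atTop 1] with n u1 u2 u3
      exact ⟨u1, u2, u3⟩
    filter_upwards [h1, h2, h3] with n u1 u2 u3
    have hn0 : (0:ℝ) < n := by exact_mod_cast u3.2.2
    have e1 : (A n : ℝ) < (εm + ε) / 2 * n := by
      rw [div_lt_iff₀ hn0] at u1; linarith
    have e2 : (ε + εM) / 2 * n < (B n : ℝ) := by
      rw [lt_div_iff₀ hn0] at u2; linarith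
    have e3 : (4 / (ε - εm) : ℝ) ≤ n := u3.1
    have e4 : (4 / (εM - ε) : ℝ) ≤ n := u3.2.1
    have d1 : (0:ℝ) < ε - εm := by linarith [hε.1]
    have d2 : (0:ℝ) < εM - ε := by linarith [hε.2]
    rw [div_le_iff₀ d1] at e3
    rw [div_le_iff₀ d2] at e4
    constructor <;> nlinarith
  obtain ⟨N1, hN1⟩ := eventually_atTop.mp hev
  set N0 := max N1 1 with hN0def
  have hN01 : 1 ≤ N0 := le_max_right _ _
  have hN0 : ∀ r, N0 ≤ r → ((A r : ℝ) + 2 ≤ ε * r ∧ ε * r + 2 ≤ B r) := fun r hr =>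
    hN1 r (le_trans (le_max_left _ _) hr)
  set D : ℕ := N0 + m with hD
  set c : ℝ := D * Real.log q / m with hc
  -- the key pointwise bound
  have key : ∀ n : ℕ, N0 + m ≤ n →
      Real.log q / m - c / n ≤ Real.log (p n ⌊ε * n⌋₊) / n := by
    intro n hn
    have hn1 : 1 ≤ n := by omega
    have hnR : (0:ℝ) < n := by exact_mod_cast hn1
    -- decompose n = m * k + r
    obtain ⟨k, r, hkr, hrN0, hrD, hk1⟩ :
        ∃ k r, m * k + r = n ∧ N0 ≤ r ∧ r < N0 + m ∧ 1 ≤ k := by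
      refine ⟨(n - N0)/m, N0 + (n - N0) % m, ?_, by omega, by
        have := Nat.mod_lt (n - N0) (by omega : 0 < m); omega, ?_⟩
      · have h := Nat.div_add_mod (n - N0) m
        omega
      · have h := Nat.div_add_mod (n - N0) m
        have h2 := Nat.mod_lt (n - N0) (by omega : 0 < m)
        rcases Nat.eq_zero_or_pos ((n - N0)/m) with h0 | h0
        · rw [h0] at h; omega
        · omega
    have hr1 : 1 ≤ r := le_trans hN01 hrN0
    obtain ⟨hrA, hrB⟩ := hN0 r hrN0
    set F := ⌊ε * n⌋₊ with hF
    have hFlow : ε * n - 1 < (F : ℝ) := Nat.sub_one_lt_floor (ε * n)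
    have hFup : (F : ℝ) ≤ ε * n := Nat.floor_le (by positivity)
    have hcast : (n : ℝ) = m * k + r := by exact_mod_cast hkr.symm
    have hkR : (0:ℝ) ≤ k := Nat.cast_nonneg k
    have hεn : ε * (n : ℝ) = (k : ℝ) * (ε * m) + ε * r := by rw [hcast]; ring
    have hka1 : (k : ℝ) * a ≤ (k : ℝ) * (ε * m) := mul_le_mul_of_nonneg_left haε hkR
    have hka2 : (k : ℝ) * (ε * m) ≤ (k : ℝ) * ((a : ℝ) + 1) :=
      mul_le_mul_of_nonneg_left haε2.le hkR
    -- (i)  A r + k * a ≤ F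
    have hi : A r + k * a ≤ F := by
      have h' : ((A r + k * a : ℕ) : ℝ) < F := by push_cast; linarith
      exact_mod_cast h'.le
    -- (ii)  F ≤ B r + k * a + k
    have hii : F ≤ B r + k * a + k := by
      have h' : (F : ℝ) ≤ ((B r + k * a + k : ℕ) : ℝ) := by push_cast; linarith
      exact_mod_cast h'
    have hABr : A r ≤ B r := hABle r hr1
    -- choose s
    set s := max (A r) (F - k * a - k) with hs
    have hsb : A r ≤ s ∧ s ≤ B r ∧ s + k * a ≤ F ∧ F ≤ s + k * a + k := by
      have h1 : A r + k * a ≤ F := hi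
      have h2 : F ≤ B r + k * a + k := hii
      set b := k * a with hb
      constructor
      · omega
      constructor
      · omega
      constructor
      · omega
      · omega
    set t := F - s - k * a with ht
    have hFt : F = (k * a + t) + s ∧ t ≤ k ∧ k * a ≤ k * a + t := by
      set b := k * a with hb
      refine ⟨by omega, by omega, by omega⟩
    -- supermultiplicative bound: q ^ k ≤ p n F
    have hpow : q ^ k ≤ p n F := by
      have h1 : q ^ k ≤ p (k * m) (k * a + t) :=
        aux_pow_le p m a hm hsuper k hk1 (k * a + t) hFt.2.2 (by omega)
      have h2 : p (k * m) (k * a + t) * p r s ≤ p (k * m + r) ((k * a + t) + s) :=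
        hsuper (k * m) r (by nlinarith) hr1 _ _
      have h3 : 1 ≤ p r s := hpos r hr1 s hsb.1 hsb.2.1
      have h4 : k * m + r = n := by rw [mul_comm]; exact hkr
      calc q ^ k = q ^ k * 1 := (mul_one _).symm
        _ ≤ p (k * m) (k * a + t) * p r s := Nat.mul_le_mul h1 h3
        _ ≤ p (k * m + r) ((k * a + t) + s) := h2
        _ = p n F := by rw [h4, ← hFt.1]
    -- take logs
    have hlog : (k : ℝ) * Real.log q ≤ Real.log (p n F) := by
      have h1 : Real.log ((q : ℝ) ^ k) ≤ Real.log (p n F) := by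
        apply Real.log_le_log (by positivity)
        exact_mod_cast hpow
      rwa [Real.log_pow] at h1
    -- arithmetic: log q / m - c / n ≤ k * log q / n
    have hkm' : (n : ℝ) - D ≤ (k : ℝ) * m := by
      have : (r : ℝ) ≤ D := by exact_mod_cast hrD.le
      rw [hcast]; nlinarith
    have harith : Real.log q / m - c / n ≤ (k : ℝ) * Real.log q / n := by
      have hc' : (m : ℝ) * c = D * Real.log q := by rw [hc]; field_simp
      rw [div_sub_div _ _ (ne_of_gt hm0) (ne_of_gt hnR), div_le_div_iff₀
        (by positivity) hnR]
      have h1 := mul_le_mul_of_nonneg_right hkm' hlogq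
      have h2 := mul_le_mul_of_nonneg_right h1 hnR.le
      have h3 : (m : ℝ) * c * n = D * Real.log q * n := by rw [hc']
      nlinarith [h2, h3]
    exact le_trans harith ((div_le_div_iff_of_pos_right hnR).mpr hlog)
  -- assemble via liminf
  have hu : Tendsto (fun n : ℕ => Real.log q / m - c / n) atTop (nhds (Real.log q / m)) := by
    simpa using tendsto_const_nhds.sub (tendsto_const_div_atTop_nhds_zero_nat c)
  have hmin : min (Real.log (p m a)) (Real.log (p m (a + 1))) = Real.log q := by
    rcases le_total (p m a) (p m (a + 1)) with h | h
    · rw [hq, min_eq_left h, min_eq_left]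
      exact Real.log_le_log (by exact_mod_cast hpos m hm a hAm (by omega)) (by exact_mod_cast h)
    · rw [hq, min_eq_right h, min_eq_right]
      exact Real.log_le_log (by exact_mod_cast hpos m hm (a + 1) (by omega) hBm)
        (by exact_mod_cast h)
  rw [hmin, one_div, inv_mul_eq_div, ← hu.liminf_eq]
  refine liminf_le_liminf (eventually_atTop.mpr ⟨N0 + m, key⟩)
    (hu.isBoundedUnder_ge) ?_
  refine Filter.IsBoundedUnder.isCoboundedUnder_ge ?_
  have hK1 : 1 ≤ K := by
    have h1 : (1 : ℝ) ≤ (p m a : ℝ) := by exact_mod_cast hpos m hm a hAm (by omega)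
    have h2 := hpK m hm a
    by_contra hcon
    push_neg at hcon
    have : K ^ m < 1 := pow_lt_one₀ hK.le hcon (by omega)
    linarith
  have hlogK : 0 ≤ Real.log K := Real.log_nonneg hK1
  refine isBoundedUnder_of_eventually_le (a := Real.log K) ?_
  filter_upwards [eventually_ge_atTop 1] with n hn1
  have hnR : (0 : ℝ) < n := by exact_mod_cast hn1
  rcases Nat.eq_zero_or_pos (p n ⌊ε * n⌋₊) with h0 | h0
  · rw [h0]; simpa using hlogK
  · have h1 : Real.log (p n ⌊ε * n⌋₊) ≤ Real.log (K ^ n) :=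
      Real.log_le_log (by exact_mod_cast h0) (hpK n hn1 _)
    rw [Real.log_pow] at h1
    rw [div_le_iff₀ hnR]
    calc Real.log (p n ⌊ε * n⌋₊) ≤ n * Real.log K := h1
      _ = Real.log K * n := by ring
end

section
/- Under Assumptions A with ε_m < ε_M, the function log 𝒫 satisfies the midpoint concavity inequality log 𝒫(ε) + log 𝒫(δ) ≤ 2·log 𝒫((ε + δ)/2) for all ε, δ ∈ (ε_m, ε_M). -/
/-!
Superadditivity lets one concatenate a configuration of length `n` at density `ε`, one of
length `n` at density `δ`, and a fixed block of length `n₀` whose count `d` is chosen so that the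
total count is exactly `⌊γ (2n + n₀)⌋` for `γ = (ε + δ) / 2`. Such a block has positive weight
because `γ` lies strictly inside `(ε_m, ε_M)`, and `d` stays within a bounded window around `γ n₀`
whatever `n` is. Taking logarithms, dividing by `n` and letting `n → ∞`, the fixed block disappears
and `log 𝒫(ε) + log 𝒫(δ) ≤ 2 log 𝒫(γ)`.
-/

open Filter Set Topology

theorem eventually_add_lt_mul_of_tendsto_div {a : ℕ → ℝ} {l γ : ℝ}
    (ha : Tendsto (fun n : ℕ => a n / n) atTop (𝓝 l)) (hlγ : l < γ) (c : ℝ) :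
    ∀ᶠ n : ℕ in atTop, a n + c < γ * n := by
  have hlim : Tendsto (fun n : ℕ => a n / n + c / n) atTop (𝓝 (l + 0)) :=
    ha.add (tendsto_const_div_atTop_nhds_zero_nat c)
  filter_upwards [hlim.eventually_lt_const (by simpa using hlγ), eventually_gt_atTop 0]
    with n hn hn0
  rwa [← add_div, div_lt_iff₀ (by exact_mod_cast hn0)] at hn

theorem eventually_mul_add_lt_of_tendsto_div {b : ℕ → ℝ} {l γ : ℝ}
    (hb : Tendsto (fun n : ℕ => b n / n) atTop (𝓝 l)) (hγl : γ < l) (c : ℝ) :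
    ∀ᶠ n : ℕ in atTop, γ * n + c < b n := by
  have hneg : Tendsto (fun n : ℕ => -b n / n) atTop (𝓝 (-l)) := by
    simpa only [neg_div] using hb.neg
  filter_upwards [eventually_add_lt_mul_of_tendsto_div hneg (neg_lt_neg hγl) c] with n hn
  linarith

theorem exists_floor_add_floor_add_eq_floor {x y z : ℝ} (hx : 0 ≤ x) (hy : 0 ≤ y) (hz : 0 ≤ z) :
    ∃ d : ℕ, ⌊x⌋₊ + ⌊y⌋₊ + d = ⌊x + y + z⌋₊ ∧ z - 1 < d ∧ (d : ℝ) < z + 2 := by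
  have hfx := Nat.floor_le hx
  have hfy := Nat.floor_le hy
  have hle : ⌊x⌋₊ + ⌊y⌋₊ ≤ ⌊x + y + z⌋₊ := Nat.le_floor (by push_cast; linarith)
  refine ⟨_, Nat.add_sub_cancel' hle, ?_, ?_⟩ <;> rw [Nat.cast_sub hle] <;> push_cast
  · linarith [Nat.sub_one_lt_floor (x + y + z)]
  · linarith [Nat.floor_le (by positivity : 0 ≤ x + y + z), Nat.sub_one_lt_floor x,
      Nat.sub_one_lt_floor y]

theorem add_le_two_mul_of_tendsto {f g h : ℕ → ℝ} {a b c : ℝ} (k : ℕ)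
    (hf : Tendsto (fun n : ℕ => f n / n) atTop (𝓝 a))
    (hg : Tendsto (fun n : ℕ => g n / n) atTop (𝓝 b))
    (hh : Tendsto (fun n : ℕ => h n / n) atTop (𝓝 c))
    (hle : ∀ᶠ n : ℕ in atTop, f n + g n ≤ h (2 * n + k)) :
    a + b ≤ 2 * c := by
  have hratio : Tendsto (fun n : ℕ => ((2 * n + k : ℕ) : ℝ) / n) atTop (𝓝 2) := by
    have hlim : Tendsto (fun n : ℕ => 2 + (k : ℝ) / n) atTop (𝓝 (2 + 0)) :=
      tendsto_const_nhds.add (tendsto_const_div_atTop_nhds_zero_nat _)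
    refine (add_zero (2 : ℝ) ▸ hlim).congr' ?_
    filter_upwards [eventually_gt_atTop 0] with n hn
    field_simp
    push_cast
    ring
  have hsub : Tendsto (fun n : ℕ => 2 * n + k) atTop atTop :=
    tendsto_atTop_mono (fun n => show n ≤ 2 * n + k by omega) tendsto_id
  refine le_of_tendsto_of_tendsto (hf.add hg) (hratio.mul (hh.comp hsub)) ?_
  filter_upwards [hle, eventually_gt_atTop 0] with n hn hn0
  have hcancel : ((2 * n + k : ℕ) : ℝ) / n * (h (2 * n + k) / ((2 * n + k : ℕ) : ℝ))
      = h (2 * n + k) / n := by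
    have : ((2 * n + k : ℕ) : ℝ) ≠ 0 := by positivity
    field_simp
  simp only [Function.comp_apply, hcancel, ← add_div]
  gcongr

section Superadditive

variable {p : ℕ → ℕ → ℕ} {A B : ℕ → ℕ}

theorem mul_le_of_superadditive
    (hsuper : ∀ n₁ n₂, 1 ≤ n₁ → 1 ≤ n₂ → ∀ m₁ m₂, p n₁ m₁ * p n₂ m₂ ≤ p (n₁ + n₂) (m₁ + m₂))
    {n n₀ d : ℕ} (hn : 1 ≤ n) (hn₀ : 1 ≤ n₀) (hd : 0 < p n₀ d) (a b : ℕ) :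
    p n a * p n b ≤ p (2 * n + n₀) (a + b + d) :=
  calc p n a * p n b
      ≤ p (n + n) (a + b) := hsuper n n hn hn a b
    _ ≤ p (n + n) (a + b) * p n₀ d := Nat.le_mul_of_pos_right _ hd
    _ ≤ p (n + n + n₀) (a + b + d) := hsuper _ _ (by omega) hn₀ _ _
    _ = p (2 * n + n₀) (a + b + d) := by rw [two_mul]

theorem mul_le_floor_midpoint
    (hpos : ∀ n, 1 ≤ n → ∀ m, A n ≤ m → m ≤ B n → 0 < p n m)
    (hsuper : ∀ n₁ n₂, 1 ≤ n₁ → 1 ≤ n₂ → ∀ m₁ m₂, p n₁ m₁ * p n₂ m₂ ≤ p (n₁ + n₂) (m₁ + m₂))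
    {ε δ : ℝ} (hε : 0 ≤ ε) (hδ : 0 ≤ δ) {n₀ : ℕ} (hn₀ : 1 ≤ n₀)
    (hA : (A n₀ : ℝ) + 1 < (ε + δ) / 2 * n₀) (hB : (ε + δ) / 2 * n₀ + 2 < B n₀)
    {n : ℕ} (hn : 1 ≤ n) :
    p n ⌊ε * n⌋₊ * p n ⌊δ * n⌋₊ ≤ p (2 * n + n₀) ⌊(ε + δ) / 2 * ((2 * n + n₀ : ℕ) : ℝ)⌋₊ := by
  have hsplit : (ε + δ) / 2 * ((2 * n + n₀ : ℕ) : ℝ) = ε * n + δ * n + (ε + δ) / 2 * n₀ := by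
    push_cast
    ring
  obtain ⟨d, hd, hd_lo, hd_hi⟩ :=
    exists_floor_add_floor_add_eq_floor (x := ε * n) (y := δ * n) (z := (ε + δ) / 2 * n₀)
      (by positivity) (by positivity) (by positivity)
  have hAd : A n₀ ≤ d := by exact_mod_cast (by linarith : (A n₀ : ℝ) < d).le
  have hdB : d ≤ B n₀ := by exact_mod_cast (by linarith : (d : ℝ) < B n₀).le
  rw [hsplit, ← hd]
  exact mul_le_of_superadditive hsuper hn hn₀ (hpos n₀ hn₀ d hAd hdB) _ _

theorem eventually_pos_floor (hpos : ∀ n, 1 ≤ n → ∀ m, A n ≤ m → m ≤ B n → 0 < p n m)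
    {εm εM ε : ℝ} (hεm : Tendsto (fun n : ℕ => (A n : ℝ) / n) atTop (𝓝 εm))
    (hεM : Tendsto (fun n : ℕ => (B n : ℝ) / n) atTop (𝓝 εM)) (hε : ε ∈ Ioo εm εM) :
    ∀ᶠ n : ℕ in atTop, 0 < p n ⌊ε * n⌋₊ := by
  filter_upwards [eventually_ge_atTop 1, eventually_add_lt_mul_of_tendsto_div hεm hε.1 0,
    eventually_mul_add_lt_of_tendsto_div hεM hε.2 0] with n hn hAn hBn
  exact hpos n hn _ (Nat.le_floor (by linarith)) (Nat.floor_le_of_le (by linarith))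

end Superadditive

theorem logP_midpoint_concave_general
    (p : ℕ → ℕ → ℕ) (A B : ℕ → ℕ)
    (hpos : ∀ n, 1 ≤ n → ∀ m, A n ≤ m → m ≤ B n → 0 < p n m)
    (hsuper : ∀ n₁ n₂, 1 ≤ n₁ → 1 ≤ n₂ → ∀ m₁ m₂,
      p n₁ m₁ * p n₂ m₂ ≤ p (n₁ + n₂) (m₁ + m₂))
    (εm εM : ℝ)
    (hεm : Tendsto (fun n : ℕ => (A n : ℝ) / n) atTop (nhds εm))
    (hεM : Tendsto (fun n : ℕ => (B n : ℝ) / n) atTop (nhds εM))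
    (logP : ℝ → ℝ)
    (hP : ∀ ε ∈ Set.Ioo εm εM,
      Tendsto (fun n : ℕ => Real.log (p n ⌊ε * n⌋₊) / n) atTop (nhds (logP ε))) :
    ∀ ε ∈ Set.Ioo εm εM, ∀ δ ∈ Set.Ioo εm εM,
      logP ε + logP δ ≤ 2 * logP ((ε + δ) / 2) := by
  intro ε hε δ hδ
  have hγ : (ε + δ) / 2 ∈ Ioo εm εM := ⟨by linarith [hε.1, hδ.1], by linarith [hε.2, hδ.2]⟩
  have hεm0 : 0 ≤ εm := ge_of_tendsto' hεm fun n => by positivity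
  obtain ⟨n₀, ⟨hn₀, hAn₀⟩, hBn₀⟩ := (((eventually_ge_atTop 1).and
    (eventually_add_lt_mul_of_tendsto_div hεm hγ.1 1)).and
    (eventually_mul_add_lt_of_tendsto_div hεM hγ.2 2)).exists
  refine add_le_two_mul_of_tendsto n₀ (hP ε hε) (hP δ hδ) (hP _ hγ) ?_
  filter_upwards [eventually_ge_atTop 1, eventually_pos_floor hpos hεm hεM hε,
    eventually_pos_floor hpos hεm hεM hδ] with n hn hpε hpδ
  rw [← Real.log_mul (by positivity) (by positivity)]
  refine Real.log_le_log (by positivity) ?_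
  exact_mod_cast mul_le_floor_midpoint hpos hsuper (by linarith [hε.1]) (by linarith [hδ.1])
    hn₀ hAn₀ hBn₀ hn

/-- Under Assumptions A with `ε_m < ε_M`, the function `log 𝒫` satisfies midpoint
concavity: `log 𝒫(ε) + log 𝒫(δ) ≤ 2 log 𝒫((ε+δ)/2)` for all `ε, δ ∈ (ε_m, ε_M)`. -/
theorem logP_midpoint_concave
    (p : ℕ → ℕ → ℕ) (A B : ℕ → ℕ) (K C : ℝ)
    (hK : 0 < K) (hpK : ∀ n, 1 ≤ n → ∀ m, (p n m : ℝ) ≤ K ^ n)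
    (hC : 0 < C)
    (hABle : ∀ n, 1 ≤ n → A n ≤ B n)
    (hBC : ∀ n, 1 ≤ n → (B n : ℝ) ≤ C * n)
    (hpos : ∀ n, 1 ≤ n → ∀ m, A n ≤ m → m ≤ B n → 0 < p n m)
    (hzero : ∀ n, 1 ≤ n → ∀ m, (m < A n ∨ B n < m) → p n m = 0)
    (hsuper : ∀ n₁ n₂, 1 ≤ n₁ → 1 ≤ n₂ → ∀ m₁ m₂,
      p n₁ m₁ * p n₂ m₂ ≤ p (n₁ + n₂) (m₁ + m₂))
    (εm εM : ℝ)
    (hεm : Tendsto (fun n : ℕ => (A n : ℝ) / n) atTop (nhds εm))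
    (hεM : Tendsto (fun n : ℕ => (B n : ℝ) / n) atTop (nhds εM))
    (hlt : εm < εM)
    (logP : ℝ → ℝ)
    (hP : ∀ ε ∈ Set.Ioo εm εM,
      Tendsto (fun n : ℕ => Real.log (p n ⌊ε * n⌋₊) / n) atTop (nhds (logP ε))) :
    ∀ ε ∈ Set.Ioo εm εM, ∀ δ ∈ Set.Ioo εm εM,
      logP ε + logP δ ≤ 2 * logP ((ε + δ) / 2) :=
  logP_midpoint_concave_general p A B hpos hsuper εm εM hεm hεM logP hP
end

section
/- Under Assumptions A with ε_m < ε_M, the function ε ↦ log 𝒫(ε) is concave on the open interval (ε_m, ε_M); consequently it is continuous on (ε_m, ε_M). -/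
open Filter Set Topology

/-!
Fix `x, y` in `(ε_m, ε_M)`, weights `a + b = 1` and `ε = a x + b y`. For large `N` split it as
`⌊a N⌋₊ + ⌊b N⌋₊ + L`, with a block of fixed length `L` chosen once and for all so that the
window `[A_L, B_L]` contains every integer within `|ε - x| + |ε - y| + 1` of `ε L`. That block
absorbs all rounding errors, so supermultiplicativity gives
`p_{⌊aN⌋₊}(⌊x ⌊aN⌋₊⌋₊) · p_{⌊bN⌋₊}(⌊y ⌊bN⌋₊⌋₊) ≤ p_{N'}(⌊ε N'⌋₊)` for `N' = ⌊aN⌋₊ + ⌊bN⌋₊ + L`.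
Taking logarithms, dividing by `N` and letting `N → ∞` yields
`a log 𝒫(x) + b log 𝒫(y) ≤ log 𝒫(ε)`. A concave function on an open interval is continuous.
-/

def IsSupermultiplicative (p : ℕ → ℕ → ℕ) : Prop :=
  ∀ n₁ n₂, 1 ≤ n₁ → 1 ≤ n₂ → ∀ m₁ m₂, p n₁ m₁ * p n₂ m₂ ≤ p (n₁ + n₂) (m₁ + m₂)

lemma eventually_add_le_mul_of_tendsto_div {u : ℕ → ℝ} {l ε : ℝ}
    (hu : Tendsto (fun n : ℕ => u n / n) atTop (𝓝 l)) (hlε : l < ε) (s : ℝ) :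
    ∀ᶠ n : ℕ in atTop, u n + s ≤ ε * n := by
  have hratio : ∀ᶠ n : ℕ in atTop, u n / n < (l + ε) / 2 :=
    hu.eventually_lt_const (by linarith)
  have hlarge : ∀ᶠ n : ℕ in atTop, s ≤ (ε - l) / 2 * n :=
    (tendsto_natCast_atTop_atTop.const_mul_atTop (by linarith)).eventually_ge_atTop s
  filter_upwards [hratio, hlarge, eventually_gt_atTop 0] with n hratio hlarge hn
  rw [div_lt_iff₀ (by exact_mod_cast hn)] at hratio
  linarith

lemma eventually_mul_add_le_of_tendsto_div {u : ℕ → ℝ} {l ε : ℝ}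
    (hu : Tendsto (fun n : ℕ => u n / n) atTop (𝓝 l)) (hεl : ε < l) (s : ℝ) :
    ∀ᶠ n : ℕ in atTop, ε * n + s ≤ u n := by
  have hneg : Tendsto (fun n : ℕ => -u n / n) atTop (𝓝 (-l)) := by
    simpa only [neg_div] using hu.neg
  filter_upwards [eventually_add_le_mul_of_tendsto_div hneg (neg_lt_neg hεl) s] with n h
  linarith

lemma tendsto_comp_div_of_tendsto_div {G : ℕ → ℝ} {k : ℕ → ℕ} {a l : ℝ}
    (hG : Tendsto (fun n : ℕ => G n / n) atTop (𝓝 l)) (hk : Tendsto k atTop atTop)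
    (hka : Tendsto (fun N : ℕ => (k N : ℝ) / N) atTop (𝓝 a)) :
    Tendsto (fun N : ℕ => G (k N) / N) atTop (𝓝 (a * l)) := by
  refine (hka.mul (hG.comp hk)).congr' ?_
  filter_upwards [hk.eventually_ge_atTop 1] with N hN
  have hkN : (k N : ℝ) ≠ 0 := by positivity
  simp only [Function.comp_apply]
  field_simp

lemma abs_convexComb_mul_add_sub_le {a b x y t u v : ℝ} (hab : a + b = 1)
    (hu : |u - a * t| ≤ 1) (hv : |v - b * t| ≤ 1) :
    |(a * x + b * y) * (u + v) - (x * u + y * v)| ≤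
      |a * x + b * y - x| + |a * x + b * y - y| := by
  set ε := a * x + b * y with hε
  have hsplit : ε * (u + v) - (x * u + y * v) = (ε - x) * (u - a * t) + (ε - y) * (v - b * t) := by
    rw [hε]
    linear_combination (t * (a * x + b * y)) * hab
  calc |ε * (u + v) - (x * u + y * v)|
      ≤ |ε - x| * |u - a * t| + |ε - y| * |v - b * t| := by
        rw [hsplit, ← abs_mul, ← abs_mul]
        exact abs_add_le _ _
    _ ≤ |ε - x| * 1 + |ε - y| * 1 := by gcongr
    _ = |ε - x| + |ε - y| := by ring

lemma exists_floor_add_floor_add_eq_floor_s12 {x y ε e : ℝ} (hx : 0 ≤ x) (hy : 0 ≤ y) (hε : 0 ≤ ε)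
    {n₁ n₂ L α β : ℕ} (herr : |ε * (n₁ + n₂) - (x * n₁ + y * n₂)| ≤ e)
    (hα : α + (e + 1) ≤ ε * L) (hβ : ε * L + (e + 1) ≤ β) :
    ∃ r, α ≤ r ∧ r ≤ β ∧ ⌊x * n₁⌋₊ + ⌊y * n₂⌋₊ + r = ⌊ε * ((n₁ + n₂ + L : ℕ) : ℝ)⌋₊ := by
  set m₁ := ⌊x * n₁⌋₊
  set m₂ := ⌊y * n₂⌋₊
  set M := ⌊ε * ((n₁ + n₂ + L : ℕ) : ℝ)⌋₊
  have hm₁ : (m₁ : ℝ) ≤ x * n₁ ∧ x * n₁ - 1 < m₁ :=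
    ⟨Nat.floor_le (by positivity), Nat.sub_one_lt_floor _⟩
  have hm₂ : (m₂ : ℝ) ≤ y * n₂ ∧ y * n₂ - 1 < m₂ :=
    ⟨Nat.floor_le (by positivity), Nat.sub_one_lt_floor _⟩
  have hM : (M : ℝ) ≤ ε * ((n₁ + n₂ + L : ℕ) : ℝ) ∧ ε * ((n₁ + n₂ + L : ℕ) : ℝ) - 1 < M :=
    ⟨Nat.floor_le (by positivity), Nat.sub_one_lt_floor _⟩
  push_cast at hM
  obtain ⟨herr_le, herr_ge⟩ := abs_le.1 herr
  have hlow : ((m₁ + m₂ + α : ℕ) : ℝ) < M := by push_cast; linarith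
  have hupp : (M : ℝ) < ((m₁ + m₂ + β + 1 : ℕ) : ℝ) := by push_cast; linarith
  have hlow' : m₁ + m₂ + α < M := by exact_mod_cast hlow
  have hupp' : M < m₁ + m₂ + β + 1 := by exact_mod_cast hupp
  exact ⟨M - (m₁ + m₂), by omega, by omega, by omega⟩

lemma log_add_log_le_log_of_pos {p : ℕ → ℕ → ℕ} (hsuper : IsSupermultiplicative p)
    {n₁ n₂ L m₁ m₂ r : ℕ} (h₁ : 1 ≤ n₁) (h₂ : 1 ≤ n₂) (hL : 1 ≤ L)
    (hp₁ : 0 < p n₁ m₁) (hp₂ : 0 < p n₂ m₂) (hr : 0 < p L r) :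
    Real.log (p n₁ m₁) + Real.log (p n₂ m₂) ≤ Real.log (p (n₁ + n₂ + L) (m₁ + m₂ + r)) := by
  have hmul : p n₁ m₁ * p n₂ m₂ ≤ p (n₁ + n₂ + L) (m₁ + m₂ + r) :=
    calc p n₁ m₁ * p n₂ m₂ ≤ p n₁ m₁ * p n₂ m₂ * p L r := Nat.le_mul_of_pos_right _ hr
      _ ≤ p (n₁ + n₂) (m₁ + m₂) * p L r := Nat.mul_le_mul_right _ (hsuper _ _ h₁ h₂ _ _)
      _ ≤ p (n₁ + n₂ + L) (m₁ + m₂ + r) := hsuper _ _ (by omega) hL _ _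
  rw [← Real.log_mul (by exact_mod_cast hp₁.ne') (by exact_mod_cast hp₂.ne')]
  exact Real.log_le_log (by exact_mod_cast Nat.mul_pos hp₁ hp₂) (by exact_mod_cast hmul)

section Supermultiplicative

variable {p : ℕ → ℕ → ℕ} {A B : ℕ → ℕ} {εm εM : ℝ}

lemma eventually_pos_floor_mul
    (hpos : ∀ n, 1 ≤ n → ∀ m, A n ≤ m → m ≤ B n → 0 < p n m)
    (hεm : Tendsto (fun n : ℕ => (A n : ℝ) / n) atTop (𝓝 εm))
    (hεM : Tendsto (fun n : ℕ => (B n : ℝ) / n) atTop (𝓝 εM))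
    {ε : ℝ} (hε : ε ∈ Ioo εm εM) :
    ∀ᶠ n : ℕ in atTop, 1 ≤ n ∧ 0 < p n ⌊ε * n⌋₊ := by
  filter_upwards [eventually_add_le_mul_of_tendsto_div hεm hε.1 0,
    eventually_mul_add_le_of_tendsto_div hεM hε.2 0, eventually_ge_atTop 1] with n hA hB hn
  exact ⟨hn, hpos n hn _ (Nat.le_floor (by linarith)) (Nat.floor_le_of_le (by linarith))⟩

theorem concaveOn_Ioo_of_isSupermultiplicative
    (hpos : ∀ n, 1 ≤ n → ∀ m, A n ≤ m → m ≤ B n → 0 < p n m)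
    (hsuper : IsSupermultiplicative p)
    (hεm : Tendsto (fun n : ℕ => (A n : ℝ) / n) atTop (𝓝 εm))
    (hεM : Tendsto (fun n : ℕ => (B n : ℝ) / n) atTop (𝓝 εM))
    {logP : ℝ → ℝ} (hP : ∀ ε ∈ Ioo εm εM,
      Tendsto (fun n : ℕ => Real.log (p n ⌊ε * n⌋₊) / n) atTop (𝓝 (logP ε))) :
    ConcaveOn ℝ (Ioo εm εM) logP := by
  refine concaveOn_iff_forall_pos.2 ⟨convex_Ioo _ _, fun x hx y hy a b ha hb hab => ?_⟩
  simp only [smul_eq_mul]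
  have hεm0 : 0 ≤ εm := ge_of_tendsto' hεm fun n => by positivity
  set ε := a * x + b * y
  have hε : ε ∈ Ioo εm εM := by
    simpa only [smul_eq_mul] using convex_Ioo εm εM hx hy ha.le hb.le hab
  obtain ⟨L, hLA, hLB, hL⟩ :=
    ((eventually_add_le_mul_of_tendsto_div hεm hε.1 (|ε - x| + |ε - y| + 1)).and
      ((eventually_mul_add_le_of_tendsto_div hεM hε.2 (|ε - x| + |ε - y| + 1)).and
        (eventually_ge_atTop 1))).exists
  set n₁ : ℕ → ℕ := fun N => ⌊a * N⌋₊
  set n₂ : ℕ → ℕ := fun N => ⌊b * N⌋₊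
  have hlim₁ : Tendsto (fun N : ℕ => (n₁ N : ℝ) / N) atTop (𝓝 a) :=
    (tendsto_nat_floor_mul_div_atTop ha.le).comp tendsto_natCast_atTop_atTop
  have hlim₂ : Tendsto (fun N : ℕ => (n₂ N : ℝ) / N) atTop (𝓝 b) :=
    (tendsto_nat_floor_mul_div_atTop hb.le).comp tendsto_natCast_atTop_atTop
  have hlim : Tendsto (fun N : ℕ => ((n₁ N + n₂ N + L : ℕ) : ℝ) / N) atTop (𝓝 1) := by
    have := (hlim₁.add hlim₂).add (tendsto_const_div_atTop_nhds_zero_nat (L : ℝ))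
    rw [add_zero, hab] at this
    refine this.congr fun N => ?_
    push_cast
    ring
  have hinf₁ : Tendsto n₁ atTop atTop :=
    tendsto_nat_floor_atTop.comp (tendsto_natCast_atTop_atTop.const_mul_atTop ha)
  have hinf₂ : Tendsto n₂ atTop atTop :=
    tendsto_nat_floor_atTop.comp (tendsto_natCast_atTop_atTop.const_mul_atTop hb)
  have hinf : Tendsto (fun N => n₁ N + n₂ N + L) atTop atTop :=
    tendsto_atTop_mono (fun N => by omega) hinf₁
  have hsplit : ∀ᶠ N : ℕ in atTop,
      Real.log (p (n₁ N) ⌊x * n₁ N⌋₊) / N + Real.log (p (n₂ N) ⌊y * n₂ N⌋₊) / N ≤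
        Real.log (p (n₁ N + n₂ N + L) ⌊ε * ((n₁ N + n₂ N + L : ℕ) : ℝ)⌋₊) / N := by
    filter_upwards [hinf₁.eventually (eventually_pos_floor_mul hpos hεm hεM hx),
      hinf₂.eventually (eventually_pos_floor_mul hpos hεm hεM hy)] with N ⟨h₁, hp₁⟩ ⟨h₂, hp₂⟩
    have herr := abs_convexComb_mul_add_sub_le (x := x) (y := y) hab
      (Nat.abs_floor_sub_le (by positivity : 0 ≤ a * N))
      (Nat.abs_floor_sub_le (by positivity : 0 ≤ b * N))
    obtain ⟨r, hrA, hrB, hr⟩ := exists_floor_add_floor_add_eq_floor_s12 (hεm0.trans hx.1.le)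
      (hεm0.trans hy.1.le) (hεm0.trans hε.1.le) herr hLA hLB
    rw [← add_div, ← hr]
    gcongr
    exact log_add_log_le_log_of_pos hsuper h₁ h₂ hL hp₁ hp₂ (hpos L hL r hrA hrB)
  have := le_of_tendsto_of_tendsto
    ((tendsto_comp_div_of_tendsto_div (hP x hx) hinf₁ hlim₁).add
      (tendsto_comp_div_of_tendsto_div (hP y hy) hinf₂ hlim₂))
    (tendsto_comp_div_of_tendsto_div (hP ε hε) hinf hlim) hsplit
  rwa [one_mul] at this

end Supermultiplicative

theorem logP_concave_continuous_general
    (p : ℕ → ℕ → ℕ) (A B : ℕ → ℕ)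
    (hpos : ∀ n, 1 ≤ n → ∀ m, A n ≤ m → m ≤ B n → 0 < p n m)
    (hsuper : ∀ n₁ n₂, 1 ≤ n₁ → 1 ≤ n₂ → ∀ m₁ m₂,
      p n₁ m₁ * p n₂ m₂ ≤ p (n₁ + n₂) (m₁ + m₂))
    (εm εM : ℝ)
    (hεm : Tendsto (fun n : ℕ => (A n : ℝ) / n) atTop (nhds εm))
    (hεM : Tendsto (fun n : ℕ => (B n : ℝ) / n) atTop (nhds εM))
    (logP : ℝ → ℝ)
    (hP : ∀ ε ∈ Set.Ioo εm εM,
      Tendsto (fun n : ℕ => Real.log (p n ⌊ε * n⌋₊) / n) atTop (nhds (logP ε))) :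
    ConcaveOn ℝ (Set.Ioo εm εM) logP ∧ ContinuousOn logP (Set.Ioo εm εM) := by
  have hconcave := concaveOn_Ioo_of_isSupermultiplicative hpos hsuper hεm hεM hP
  exact ⟨hconcave, hconcave.continuousOn isOpen_Ioo⟩

/-- Under Assumptions A with `ε_m < ε_M`, the function `ε ↦ log 𝒫(ε)` is concave
on `(ε_m, ε_M)`; consequently it is continuous on `(ε_m, ε_M)`. -/
theorem logP_concave_continuous
    (p : ℕ → ℕ → ℕ) (A B : ℕ → ℕ) (K C : ℝ)
    (hK : 0 < K) (hpK : ∀ n, 1 ≤ n → ∀ m, (p n m : ℝ) ≤ K ^ n)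
    (hC : 0 < C)
    (hABle : ∀ n, 1 ≤ n → A n ≤ B n)
    (hBC : ∀ n, 1 ≤ n → (B n : ℝ) ≤ C * n)
    (hpos : ∀ n, 1 ≤ n → ∀ m, A n ≤ m → m ≤ B n → 0 < p n m)
    (hzero : ∀ n, 1 ≤ n → ∀ m, (m < A n ∨ B n < m) → p n m = 0)
    (hsuper : ∀ n₁ n₂, 1 ≤ n₁ → 1 ≤ n₂ → ∀ m₁ m₂,
      p n₁ m₁ * p n₂ m₂ ≤ p (n₁ + n₂) (m₁ + m₂))
    (εm εM : ℝ)
    (hεm : Tendsto (fun n : ℕ => (A n : ℝ) / n) atTop (nhds εm))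
    (hεM : Tendsto (fun n : ℕ => (B n : ℝ) / n) atTop (nhds εM))
    (hlt : εm < εM)
    (logP : ℝ → ℝ)
    (hP : ∀ ε ∈ Set.Ioo εm εM,
      Tendsto (fun n : ℕ => Real.log (p n ⌊ε * n⌋₊) / n) atTop (nhds (logP ε))) :
    ConcaveOn ℝ (Set.Ioo εm εM) logP ∧ ContinuousOn logP (Set.Ioo εm εM) :=
  logP_concave_continuous_general p A B hpos hsuper εm εM hεm hεM logP hP
end

section
/- Under Assumptions A with ε_m < ε_M, let n ≥ 1 and m ∈ ℕ be such that ε_m < m/n < ε_M. Then (1/n)·log p_n(m) ≤ log 𝒫(m/n), i.e. p_n(m) ≤ [𝒫(m/n)]^n. -/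
open Filter Set

/-- Under Assumptions A with `ε_m < ε_M`, if `n ≥ 1` and `m ∈ ℕ` satisfy
`ε_m < m/n < ε_M`, then `(1/n) log p n m ≤ log 𝒫(m/n)`, i.e.
`p n m ≤ 𝒫(m/n)^n`. -/
theorem pointwise_upper_bound
    (p : ℕ → ℕ → ℕ) (A B : ℕ → ℕ) (K C : ℝ)
    (hK : 0 < K) (hpK : ∀ n, 1 ≤ n → ∀ m, (p n m : ℝ) ≤ K ^ n)
    (hC : 0 < C)
    (hABle : ∀ n, 1 ≤ n → A n ≤ B n)
    (hBC : ∀ n, 1 ≤ n → (B n : ℝ) ≤ C * n)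
    (hpos : ∀ n, 1 ≤ n → ∀ m, A n ≤ m → m ≤ B n → 0 < p n m)
    (hzero : ∀ n, 1 ≤ n → ∀ m, (m < A n ∨ B n < m) → p n m = 0)
    (hsuper : ∀ n₁ n₂, 1 ≤ n₁ → 1 ≤ n₂ → ∀ m₁ m₂,
      p n₁ m₁ * p n₂ m₂ ≤ p (n₁ + n₂) (m₁ + m₂))
    (εm εM : ℝ)
    (hεm : Tendsto (fun n : ℕ => (A n : ℝ) / n) atTop (nhds εm))
    (hεM : Tendsto (fun n : ℕ => (B n : ℝ) / n) atTop (nhds εM))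
    (hlt : εm < εM)
    (logP : ℝ → ℝ)
    (hP : ∀ ε ∈ Set.Ioo εm εM,
      Tendsto (fun n : ℕ => Real.log (p n ⌊ε * n⌋₊) / n) atTop (nhds (logP ε))) :
    ∀ n : ℕ, 1 ≤ n → ∀ m : ℕ, (m : ℝ) / n ∈ Set.Ioo εm εM →
      Real.log (p n m) / n ≤ logP ((m : ℝ) / n) ∧
      (p n m : ℝ) ≤ (Real.exp (logP ((m : ℝ) / n))) ^ n := by
  intro n hn m hε
  set ε : ℝ := (m : ℝ) / n with hεdef
  have hnR : (0 : ℝ) < n := by exact_mod_cast hn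
  have hεnn : 0 ≤ ε := div_nonneg (by positivity) (by positivity)
  -- logP ε is nonnegative
  have hlogP0 : 0 ≤ logP ε := by
    have h1 : ∀ᶠ k : ℕ in atTop, (A k : ℝ) / k < (εm + ε) / 2 :=
      hεm.eventually_lt_const (by linarith [hε.1])
    have h2 : ∀ᶠ k : ℕ in atTop, ε < (B k : ℝ) / k :=
      hεM.eventually_const_lt hε.2
    have h3 : ∀ᶠ k : ℕ in atTop, (1 : ℝ) / k < (ε - εm) / 2 :=
      tendsto_one_div_atTop_nhds_zero_nat.eventually_lt_const (by linarith [hε.1])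
    have h4 : ∀ᶠ k : ℕ in atTop, 1 ≤ k := eventually_ge_atTop 1
    have hev : ∀ᶠ k : ℕ in atTop,
        0 ≤ Real.log (p k ⌊ε * k⌋₊) / k := by
      filter_upwards [h1, h2, h3, h4] with k hk1 hk2 hk3 hk4
      have hkR : (0 : ℝ) < k := by exact_mod_cast hk4
      have hlow : A k ≤ ⌊ε * k⌋₊ := by
        have hA : (A k : ℝ) < ε * k - 1 := by
          have := (div_lt_iff₀ hkR).mp hk1
          have := (div_lt_iff₀ hkR).mp hk3
          nlinarith
        have hfl : ε * k - 1 < (⌊ε * k⌋₊ : ℝ) := by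
          have := Nat.lt_floor_add_one (ε * k)
          linarith
        exact_mod_cast le_of_lt (hA.trans hfl)
      have hhigh : ⌊ε * k⌋₊ ≤ B k := by
        have h5 : (⌊ε * k⌋₊ : ℝ) ≤ ε * k := Nat.floor_le (by positivity)
        have h6 : ε * k < B k := by
          have := (lt_div_iff₀ hkR).mp hk2
          linarith
        exact_mod_cast le_of_lt (lt_of_le_of_lt h5 h6)
      have hp1 : 1 ≤ p k ⌊ε * k⌋₊ := hpos k hk4 _ hlow hhigh
      have : (1 : ℝ) ≤ (p k ⌊ε * k⌋₊ : ℝ) := by exact_mod_cast hp1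
      exact div_nonneg (Real.log_nonneg this) hkR.le
    exact ge_of_tendsto (hP ε hε) hev
  rcases Nat.eq_zero_or_pos (p n m) with hp0 | hppos
  · constructor
    · simp [hp0, hlogP0]
    · rw [hp0]
      push_cast
      positivity
  -- now p n m ≥ 1
  have hp1R : (1 : ℝ) ≤ (p n m : ℝ) := by exact_mod_cast hppos
  have key : ∀ k : ℕ, (p n m) ^ (k + 1) ≤ p ((k + 1) * n) ((k + 1) * m) := by
    intro k
    induction k with
    | zero => simp
    | succ k ih =>
        have h1 : 1 ≤ (k + 1) * n := Nat.one_le_iff_ne_zero.mpr (by positivity)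
        calc (p n m) ^ (k + 2) = (p n m) ^ (k + 1) * p n m := by ring
          _ ≤ p ((k + 1) * n) ((k + 1) * m) * p n m := Nat.mul_le_mul_right _ ih
          _ ≤ p ((k + 1) * n + n) ((k + 1) * m + m) := hsuper _ _ h1 hn _ _
          _ = p ((k + 2) * n) ((k + 2) * m) := by ring_nf
  have hmain : Real.log (p n m) / n ≤ logP ε := by
    have hseq : Tendsto (fun k : ℕ => (k + 1) * n) atTop atTop := by
      apply tendsto_atTop_mono (fun k => ?_) tendsto_id
      calc (id k : ℕ) = k := rfl
        _ ≤ (k + 1) * n := Nat.le_mul_of_pos_right _ (by omega) |>.trans'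
            (by omega)
    have hcomp : Tendsto
        (fun k : ℕ => Real.log (p ((k + 1) * n) ⌊ε * ((k + 1) * n : ℕ)⌋₊) /
          ((k + 1) * n : ℕ)) atTop (nhds (logP ε)) := (hP ε hε).comp hseq
    have hfloor : ∀ k : ℕ, ⌊ε * (((k + 1) * n : ℕ) : ℝ)⌋₊ = (k + 1) * m := by
      intro k
      have : ε * (((k + 1) * n : ℕ) : ℝ) = (((k + 1) * m : ℕ) : ℝ) := by
        rw [hεdef]
        push_cast
        field_simp
      rw [this, Nat.floor_natCast]
    have hcomp' : Tendsto
        (fun k : ℕ => Real.log (p ((k + 1) * n) ((k + 1) * m)) /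
          (((k + 1) * n : ℕ) : ℝ)) atTop (nhds (logP ε)) := by
      refine hcomp.congr fun k => ?_
      rw [hfloor k]
    refine ge_of_tendsto' hcomp' fun k => ?_
    have hkey := key k
    have hkeyR : ((p n m : ℝ)) ^ (k + 1) ≤ (p ((k + 1) * n) ((k + 1) * m) : ℝ) := by
      exact_mod_cast hkey
    have hlogle : (k + 1 : ℝ) * Real.log (p n m) ≤
        Real.log (p ((k + 1) * n) ((k + 1) * m)) := by
      calc (k + 1 : ℝ) * Real.log (p n m)
          = Real.log ((p n m : ℝ) ^ (k + 1)) := by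
            rw [Real.log_pow]; push_cast; ring
        _ ≤ Real.log (p ((k + 1) * n) ((k + 1) * m)) :=
            Real.log_le_log (by positivity) hkeyR
    have hden : (0 : ℝ) < (((k + 1) * n : ℕ) : ℝ) := by positivity
    rw [div_le_div_iff₀ hnR hden]
    push_cast
    nlinarith [hlogle, hnR]
  refine ⟨hmain, ?_⟩
  have hlog : Real.log (p n m) ≤ n * logP ε := by
    rw [div_le_iff₀ hnR] at hmain
    linarith
  calc (p n m : ℝ) = Real.exp (Real.log (p n m)) :=
        (Real.exp_log (by positivity)).symm
    _ ≤ Real.exp (n * logP ε) := Real.exp_le_exp.mpr hlog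
    _ = Real.exp (logP ε) ^ n := by rw [← Real.exp_nat_mul]
end

section
/- Under Assumptions A with ε_m < ε_M, let (δ_n) be a sequence of natural numbers with A_n < δ_n < B_n for all n ≥ N₀ (some N₀), and suppose δ_n/n → δ with ε_m < δ < ε_M. Then limsup_{n→∞} (1/n)·log p_n(δ_n) ≤ log 𝒫(δ). -/
open Filter Set

/-- Under Assumptions A with `ε_m < ε_M`, if `(δ_n)` is a sequence of naturals
with `A_n < δ_n < B_n` eventually and `δ_n/n → δ ∈ (ε_m, ε_M)`, then
`limsup (1/n) log p n δ_n ≤ log 𝒫(δ)`. -/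
theorem limsup_upper_bound
    (p : ℕ → ℕ → ℕ) (A B : ℕ → ℕ) (K C : ℝ)
    (hK : 0 < K) (hpK : ∀ n, 1 ≤ n → ∀ m, (p n m : ℝ) ≤ K ^ n)
    (hC : 0 < C)
    (hABle : ∀ n, 1 ≤ n → A n ≤ B n)
    (hBC : ∀ n, 1 ≤ n → (B n : ℝ) ≤ C * n)
    (hpos : ∀ n, 1 ≤ n → ∀ m, A n ≤ m → m ≤ B n → 0 < p n m)
    (hzero : ∀ n, 1 ≤ n → ∀ m, (m < A n ∨ B n < m) → p n m = 0)
    (hsuper : ∀ n₁ n₂, 1 ≤ n₁ → 1 ≤ n₂ → ∀ m₁ m₂,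
      p n₁ m₁ * p n₂ m₂ ≤ p (n₁ + n₂) (m₁ + m₂))
    (εm εM : ℝ)
    (hεm : Tendsto (fun n : ℕ => (A n : ℝ) / n) atTop (nhds εm))
    (hεM : Tendsto (fun n : ℕ => (B n : ℝ) / n) atTop (nhds εM))
    (hlt : εm < εM)
    (logP : ℝ → ℝ)
    (hP : ∀ ε ∈ Set.Ioo εm εM,
      Tendsto (fun n : ℕ => Real.log (p n ⌊ε * n⌋₊) / n) atTop (nhds (logP ε)))
    (δseq : ℕ → ℕ) (N₀ : ℕ)
    (hδseq : ∀ n, N₀ ≤ n → A n < δseq n ∧ δseq n < B n)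
    (δ : ℝ) (hδ : δ ∈ Set.Ioo εm εM)
    (htend : Tendsto (fun n : ℕ => (δseq n : ℝ) / n) atTop (nhds δ)) :
    Filter.limsup (fun n : ℕ => Real.log (p n (δseq n)) / n) atTop ≤ logP δ := by
  set a : ℕ → ℝ := fun n : ℕ => Real.log (p n (δseq n)) / n with ha
  -- δ is positive
  have hεm0 : 0 ≤ εm := by
    refine ge_of_tendsto' hεm fun n => ?_
    positivity
  have hδ0 : 0 < δ := lt_of_le_of_lt hεm0 hδ.1
  suffices hkey : ∀ k : ℕ, 1 ≤ k → Filter.limsup a atTop ≤ (1 + 1/(k:ℝ)) * logP δ by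
    have hlim : Tendsto (fun k : ℕ => (1 + 1/(k:ℝ)) * logP δ) atTop
        (nhds ((1 + 0) * logP δ)) :=
      ((tendsto_const_nhds.add tendsto_one_div_atTop_nhds_zero_nat).mul tendsto_const_nhds)
    rw [show (1 + 0 : ℝ) * logP δ = logP δ by ring] at hlim
    exact ge_of_tendsto hlim (eventually_atTop.2 ⟨1, hkey⟩)
  intro k hk
  have hk0 : (0:ℝ) < k := by exact_mod_cast hk
  set r : ℕ → ℕ := fun n => n / k + 1 with hr
  set M : ℕ → ℕ := fun n => n + r n with hM
  set s : ℕ → ℕ := fun n => ⌊δ * (M n : ℝ)⌋₊ - δseq n with hs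
  -- r tends to atTop
  have hrtop : Tendsto r atTop atTop := by
    refine tendsto_atTop_atTop.2 fun b => ⟨b * k, fun n hn => ?_⟩
    have : b ≤ n / k := (Nat.le_div_iff_mul_le (by omega)).2 hn
    simp only [hr]; omega
  have hMtop : Tendsto M atTop atTop :=
    tendsto_atTop_mono (fun n => Nat.le_add_right n (r n)) tendsto_id
  -- r n / n → 1/k
  have hrlow : ∀ n : ℕ, 1 ≤ n → 1/(k:ℝ) ≤ (r n : ℝ) / n := by
    intro n hn
    have hn0 : (0:ℝ) < n := by exact_mod_cast hn
    rw [div_le_div_iff₀ hk0 hn0]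
    have : n < (n / k + 1) * k := by
      have h := Nat.lt_succ_self (n / k)
      rwa [Nat.div_lt_iff_lt_mul (show 0 < k by omega)] at h
    have : (n:ℝ) < ((n / k + 1 : ℕ) : ℝ) * k := by exact_mod_cast this
    simp only [hr]
    nlinarith
  have hrhigh : ∀ n : ℕ, 1 ≤ n → (r n : ℝ) / n ≤ 1/(k:ℝ) + 1/n := by
    intro n hn
    have hn0 : (0:ℝ) < n := by exact_mod_cast hn
    have h1 : ((n / k : ℕ) : ℝ) ≤ (n:ℝ) / k := Nat.cast_div_le
    have h2 : (r n : ℝ) ≤ (n:ℝ)/k + 1 := by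
      simp only [hr]; push_cast; linarith
    calc (r n : ℝ) / n ≤ ((n:ℝ)/k + 1) / n := by gcongr
      _ = 1/(k:ℝ) + 1/n := by field_simp
  have hrdiv : Tendsto (fun n : ℕ => (r n : ℝ) / n) atTop (nhds (1/(k:ℝ))) := by
    have hup : Tendsto (fun n : ℕ => 1/(k:ℝ) + 1/(n:ℝ)) atTop (nhds (1/(k:ℝ) + 0)) :=
      tendsto_const_nhds.add tendsto_one_div_atTop_nhds_zero_nat
    rw [add_zero] at hup
    refine tendsto_of_tendsto_of_tendsto_of_le_of_le' tendsto_const_nhds hup ?_ ?_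
    · exact eventually_atTop.2 ⟨1, hrlow⟩
    · exact eventually_atTop.2 ⟨1, hrhigh⟩
  -- M n / n → 1 + 1/k
  have hMdiv : Tendsto (fun n : ℕ => (M n : ℝ) / n) atTop (nhds (1 + 1/(k:ℝ))) := by
    have : Tendsto (fun n : ℕ => (n:ℝ)/n + (r n : ℝ)/n) atTop (nhds (1 + 1/(k:ℝ))) := by
      refine Tendsto.add ?_ hrdiv
      refine Tendsto.congr' ?_ (tendsto_const_nhds (x := (1:ℝ)))
      filter_upwards [eventually_ge_atTop 1] with n hn
      have hn0 : (n:ℝ) ≠ 0 := by positivity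
      rw [div_self hn0]
    refine Tendsto.congr' ?_ this
    filter_upwards [eventually_ge_atTop 1] with n hn
    simp only [hM]; push_cast; ring
  -- n / r n → k
  have hnr : Tendsto (fun n : ℕ => (n:ℝ) / (r n : ℝ)) atTop (nhds k) := by
    have := hrdiv.inv₀ (by positivity : (1/(k:ℝ)) ≠ 0)
    simp only [inv_div] at this
    simpa using this
  -- eventually δseq n ≤ δ * M n
  have hE2 : ∀ᶠ n : ℕ in atTop, (δseq n : ℝ) ≤ δ * (M n : ℝ) := by
    have hδM : Tendsto (fun n : ℕ => δ * ((M n : ℝ)/n)) atTop (nhds (δ * (1 + 1/(k:ℝ)))) :=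
      tendsto_const_nhds.mul hMdiv
    have hltδ : δ < δ * (1 + 1/(k:ℝ)) := by nlinarith [one_div_pos.2 hk0]
    filter_upwards [htend.eventually_lt hδM hltδ, eventually_ge_atTop 1] with n h hn
    have hn0 : (0:ℝ) < n := by exact_mod_cast hn
    rw [div_lt_iff₀ hn0] at h
    have : δ * ((M n:ℝ)/n) * n = δ * (M n:ℝ) := by field_simp
    linarith [this ▸ h]
  have hfloorle : ∀ᶠ n : ℕ in atTop, δseq n ≤ ⌊δ * (M n : ℝ)⌋₊ := by
    filter_upwards [hE2] with n h
    exact Nat.le_floor h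
  -- s n / r n → δ
  have hsr : Tendsto (fun n : ℕ => (s n : ℝ) / (r n : ℝ)) atTop (nhds δ) := by
    set t : ℕ → ℝ := fun n =>
      ((⌊δ * (M n : ℝ)⌋₊ : ℝ) - δ * (M n : ℝ)) / (r n : ℝ)
        + (δ + (δ - (δseq n : ℝ)/n) * ((n:ℝ)/(r n : ℝ))) with ht
    have ht1 : Tendsto (fun n : ℕ => ((⌊δ * (M n : ℝ)⌋₊ : ℝ) - δ * (M n : ℝ)) / (r n : ℝ))
        atTop (nhds 0) := by
      have hneg : Tendsto (fun n : ℕ => -(1/(r n : ℝ))) atTop (nhds (-0)) :=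
        (tendsto_one_div_atTop_nhds_zero_nat.comp hrtop).neg
      rw [neg_zero] at hneg
      refine tendsto_of_tendsto_of_tendsto_of_le_of_le' hneg tendsto_const_nhds ?_ ?_
      · filter_upwards [hrtop.eventually_ge_atTop 1] with n hrn
        have hr0 : (0:ℝ) < (r n : ℝ) := by exact_mod_cast hrn
        have hfl : δ * (M n : ℝ) < (⌊δ * (M n : ℝ)⌋₊ : ℝ) + 1 :=
          Nat.lt_floor_add_one _
        have hge : (-1:ℝ) ≤ (⌊δ * (M n : ℝ)⌋₊ : ℝ) - δ * (M n : ℝ) := by linarith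
        calc -(1/(r n : ℝ)) = (-1)/(r n : ℝ) := by ring
          _ ≤ ((⌊δ * (M n : ℝ)⌋₊ : ℝ) - δ * (M n : ℝ)) / (r n : ℝ) := by gcongr
      · filter_upwards [hrtop.eventually_ge_atTop 1] with n hrn
        have hr0 : (0:ℝ) < (r n : ℝ) := by exact_mod_cast hrn
        have hfl : (⌊δ * (M n : ℝ)⌋₊ : ℝ) ≤ δ * (M n : ℝ) :=
          Nat.floor_le (by positivity)
        exact div_nonpos_of_nonpos_of_nonneg (by linarith) hr0.le
    have ht2 : Tendsto (fun n : ℕ => δ + (δ - (δseq n : ℝ)/n) * ((n:ℝ)/(r n : ℝ)))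
        atTop (nhds (δ + (δ - δ) * k)) :=
      tendsto_const_nhds.add ((tendsto_const_nhds.sub htend).mul hnr)
    have htt : Tendsto t atTop (nhds δ) := by
      have := ht1.add ht2
      rw [show (0:ℝ) + (δ + (δ - δ) * k) = δ by ring] at this
      exact this
    refine Tendsto.congr' ?_ htt
    filter_upwards [hfloorle, eventually_ge_atTop 1, hrtop.eventually_ge_atTop 1]
      with n hfle hn hrn
    have hn0 : (n:ℝ) ≠ 0 := by positivity
    have hr0 : (r n : ℝ) ≠ 0 := by
      have : (0:ℝ) < (r n : ℝ) := by exact_mod_cast hrn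
      exact this.ne'
    have hcast : (s n : ℝ) = (⌊δ * (M n : ℝ)⌋₊ : ℝ) - (δseq n : ℝ) := by
      simp only [hs]
      exact Nat.cast_sub hfle
    simp only [ht, hcast]
    have hMcast : (M n : ℝ) = (n : ℝ) + (r n : ℝ) := by simp [hM]
    rw [hMcast]
    field_simp
    ring
  -- eventually A (r n) < s n and s n < B (r n)
  have hAs : ∀ᶠ n : ℕ in atTop, A (r n) < s n := by
    have hA' : Tendsto (fun n : ℕ => (A (r n) : ℝ) / (r n : ℝ)) atTop (nhds εm) :=
      hεm.comp hrtop
    filter_upwards [hA'.eventually_lt hsr hδ.1, hrtop.eventually_ge_atTop 1] with n h hrn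
    have hr0 : (0:ℝ) < (r n : ℝ) := by exact_mod_cast hrn
    rw [div_lt_div_iff_of_pos_right hr0] at h
    exact_mod_cast h
  have hBs : ∀ᶠ n : ℕ in atTop, s n < B (r n) := by
    have hB' : Tendsto (fun n : ℕ => (B (r n) : ℝ) / (r n : ℝ)) atTop (nhds εM) :=
      hεM.comp hrtop
    filter_upwards [hsr.eventually_lt hB' hδ.2, hrtop.eventually_ge_atTop 1] with n h hrn
    have hr0 : (0:ℝ) < (r n : ℝ) := by exact_mod_cast hrn
    rw [div_lt_div_iff_of_pos_right hr0] at h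
    exact_mod_cast h
  -- positivity of p n (δseq n)
  have hppos : ∀ᶠ n : ℕ in atTop, 0 < p n (δseq n) := by
    filter_upwards [eventually_ge_atTop (max N₀ 1)] with n hn
    obtain ⟨h1, h2⟩ := hδseq n (le_trans (le_max_left _ _) hn)
    exact hpos n (le_trans (le_max_right _ _) hn) _ h1.le h2.le
  -- c is the comparison sequence
  set c : ℕ → ℝ := fun n : ℕ =>
    (M n : ℝ)/n * (Real.log (p (M n) ⌊δ * (M n : ℝ)⌋₊) / (M n : ℝ)) with hc
  have hcten : Tendsto c atTop (nhds ((1 + 1/(k:ℝ)) * logP δ)) :=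
    hMdiv.mul ((hP δ hδ).comp hMtop)
  -- eventually a n ≤ c n
  have hev : ∀ᶠ n : ℕ in atTop, a n ≤ c n := by
    filter_upwards [hppos, hAs, hBs, hfloorle, eventually_ge_atTop 1]
      with n h1 h2 h3 h4 hn
    have hrn : 1 ≤ r n := by simp [hr]
    have h5 : 0 < p (r n) (s n) := hpos (r n) hrn _ h2.le h3.le
    have h6 : p n (δseq n) * p (r n) (s n) ≤ p (M n) (δseq n + s n) :=
      hsuper n (r n) hn hrn _ _
    have h7 : δseq n + s n = ⌊δ * (M n : ℝ)⌋₊ := by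
      simp only [hs]; omega
    rw [h7] at h6
    have h8 : p n (δseq n) ≤ p (M n) ⌊δ * (M n : ℝ)⌋₊ :=
      le_trans (Nat.le_mul_of_pos_right _ h5) h6
    have hlog : Real.log (p n (δseq n)) ≤ Real.log (p (M n) ⌊δ * (M n : ℝ)⌋₊) := by
      apply Real.log_le_log (by exact_mod_cast h1)
      exact_mod_cast h8
    have hM0 : (0:ℝ) < (M n : ℝ) := by
      have : 1 ≤ M n := by simp only [hM]; omega
      exact_mod_cast this
    have hn0 : (0:ℝ) < (n : ℝ) := by exact_mod_cast hn
    have hceq : c n = Real.log (p (M n) ⌊δ * (M n : ℝ)⌋₊) / n := by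
      simp only [hc]
      field_simp
    rw [hceq, ha]
    exact div_le_div_of_nonneg_right hlog hn0.le
  -- conclude via limsup comparison
  have hcob : Filter.IsCoboundedUnder (· ≤ ·) atTop a := by
    apply Filter.isCoboundedUnder_le_of_eventually_le (x := 0) atTop
    filter_upwards [hppos] with n h1
    have : (1:ℝ) ≤ (p n (δseq n) : ℝ) := by exact_mod_cast h1
    have := Real.log_nonneg this
    positivity
  calc Filter.limsup a atTop ≤ Filter.limsup c atTop :=
        Filter.limsup_le_limsup hev hcob hcten.isBoundedUnder_le
    _ = (1 + 1/(k:ℝ)) * logP δ := hcten.limsup_eq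
end

section
/- Under Assumptions A with ε_m < ε_M, let (δ_n) be a sequence of natural numbers with δ_n/n → δ where ε_m < δ < ε_M, and let (κ_n) be a sequence of natural numbers with κ_n → ∞, κ_n/n → 0, and (δ_n − δ·n)/κ_n → 0. Then there exists N such that for all n > N: A_{κ_n} < δ_n − ⌊δ(n − κ_n)⌋ < B_{κ_n} (as integers). -/
open Filter Set Topology

/-!
Write `D_n := δ_n − ⌊δ(n − κ_n)⌋`. Since `⌊x⌋ = x − fract x`,
`D_n / κ_n = (δ_n − δn)/κ_n + δ + fract(δ(n − κ_n))/κ_n → δ`, while `A_{κ_n}/κ_n → ε_m < δ`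
and `B_{κ_n}/κ_n → ε_M > δ`; comparing the three ratios gives `A_{κ_n} < D_n < B_{κ_n}`
for large `n`.
-/

section

variable {ι : Type*} {l : Filter ι}

theorem tendsto_fract_div_atTop {u c : ι → ℝ} (hc : Tendsto c l atTop) :
    Tendsto (fun i => Int.fract (u i) / c i) l (𝓝 0) := by
  have hinv : Tendsto (fun i => (c i)⁻¹) l (𝓝 0) := tendsto_inv_atTop_zero.comp hc
  refine tendsto_of_tendsto_of_tendsto_of_le_of_le' tendsto_const_nhds hinv ?_ ?_
  · filter_upwards [hc.eventually_gt_atTop 0] with i hi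
    exact div_nonneg (Int.fract_nonneg _) hi.le
  · filter_upwards [hc.eventually_gt_atTop 0] with i hi
    rw [div_eq_mul_inv]
    exact mul_le_of_le_one_left (inv_nonneg.mpr hi.le) (Int.fract_lt_one _).le

theorem tendsto_sub_floor_mul_sub_div {x t c : ι → ℝ} {δ : ℝ} (hc : Tendsto c l atTop)
    (h : Tendsto (fun i => (x i - δ * t i) / c i) l (𝓝 0)) :
    Tendsto (fun i => (x i - ⌊δ * (t i - c i)⌋) / c i) l (𝓝 δ) := by
  have hsum := (h.add_const δ).add (tendsto_fract_div_atTop (u := fun i => δ * (t i - c i)) hc)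
  rw [zero_add, add_zero] at hsum
  refine hsum.congr' ?_
  filter_upwards [hc.eventually_ne_atTop 0] with i hi
  rw [← Int.self_sub_fract]
  field_simp
  ring

theorem eventually_lt_of_tendsto_div {a x c : ι → ℝ} {α ξ : ℝ}
    (ha : Tendsto (fun i => a i / c i) l (𝓝 α)) (hx : Tendsto (fun i => x i / c i) l (𝓝 ξ))
    (hαξ : α < ξ) (hc : ∀ᶠ i in l, 0 < c i) : ∀ᶠ i in l, a i < x i := by
  filter_upwards [ha.eventually_lt hx hαξ, hc] with i hi hci
  exact (div_lt_div_iff_of_pos_right hci).mp hi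

end

theorem claim_in_theorem_3_6_general
    (A B : ℕ → ℕ)
    (εm εM : ℝ)
    (hεm : Tendsto (fun n : ℕ => (A n : ℝ) / n) atTop (nhds εm))
    (hεM : Tendsto (fun n : ℕ => (B n : ℝ) / n) atTop (nhds εM))
    (δseq : ℕ → ℕ) (δ : ℝ) (hδ : δ ∈ Set.Ioo εm εM)
    (κ : ℕ → ℕ)
    (hκtop : Tendsto κ atTop atTop)
    (hfo : Tendsto (fun n : ℕ => ((δseq n : ℝ) - δ * n) / (κ n : ℝ)) atTop (nhds 0)) :
    ∃ N : ℕ, ∀ n : ℕ, N < n →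
      (A (κ n) : ℤ) < (δseq n : ℤ) - ⌊δ * ((n : ℝ) - (κ n : ℝ))⌋ ∧
      (δseq n : ℤ) - ⌊δ * ((n : ℝ) - (κ n : ℝ))⌋ < (B (κ n) : ℤ) := by
  have hκ : Tendsto (fun n : ℕ => (κ n : ℝ)) atTop atTop :=
    tendsto_natCast_atTop_atTop.comp hκtop
  have hD := tendsto_sub_floor_mul_sub_div hκ hfo
  have hκpos := hκ.eventually_gt_atTop 0
  have hlower := eventually_lt_of_tendsto_div (hεm.comp hκtop) hD hδ.1 hκpos
  have hupper := eventually_lt_of_tendsto_div hD (hεM.comp hκtop) hδ.2 hκpos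
  obtain ⟨N, hN⟩ := eventually_atTop.mp (hlower.and hupper)
  refine ⟨N, fun n hn => ?_⟩
  obtain ⟨hA, hB⟩ := hN n hn.le
  exact ⟨by exact_mod_cast hA, by exact_mod_cast hB⟩

/-- Under Assumptions A with `ε_m < ε_M`: if `δ_n/n → δ ∈ (ε_m, ε_M)` and `(κ_n)`
satisfies `κ_n → ∞`, `κ_n/n → 0` and `(δ_n − δn)/κ_n → 0`, then eventually
`A_{κ_n} < δ_n − ⌊δ(n − κ_n)⌋ < B_{κ_n}` (as integers). -/
theorem claim_in_theorem_3_6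
    (p : ℕ → ℕ → ℕ) (A B : ℕ → ℕ) (K C : ℝ)
    (hK : 0 < K) (hpK : ∀ n, 1 ≤ n → ∀ m, (p n m : ℝ) ≤ K ^ n)
    (hC : 0 < C)
    (hABle : ∀ n, 1 ≤ n → A n ≤ B n)
    (hBC : ∀ n, 1 ≤ n → (B n : ℝ) ≤ C * n)
    (hpos : ∀ n, 1 ≤ n → ∀ m, A n ≤ m → m ≤ B n → 0 < p n m)
    (hzero : ∀ n, 1 ≤ n → ∀ m, (m < A n ∨ B n < m) → p n m = 0)
    (hsuper : ∀ n₁ n₂, 1 ≤ n₁ → 1 ≤ n₂ → ∀ m₁ m₂,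
      p n₁ m₁ * p n₂ m₂ ≤ p (n₁ + n₂) (m₁ + m₂))
    (εm εM : ℝ)
    (hεm : Tendsto (fun n : ℕ => (A n : ℝ) / n) atTop (nhds εm))
    (hεM : Tendsto (fun n : ℕ => (B n : ℝ) / n) atTop (nhds εM))
    (hlt : εm < εM)
    (δseq : ℕ → ℕ) (δ : ℝ) (hδ : δ ∈ Set.Ioo εm εM)
    (htend : Tendsto (fun n : ℕ => (δseq n : ℝ) / n) atTop (nhds δ))
    (κ : ℕ → ℕ)
    (hκtop : Tendsto κ atTop atTop)
    (hκo : Tendsto (fun n : ℕ => (κ n : ℝ) / n) atTop (nhds 0))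
    (hfo : Tendsto (fun n : ℕ => ((δseq n : ℝ) - δ * n) / (κ n : ℝ)) atTop (nhds 0)) :
    ∃ N : ℕ, ∀ n : ℕ, N < n →
      (A (κ n) : ℤ) < (δseq n : ℤ) - ⌊δ * ((n : ℝ) - (κ n : ℝ))⌋ ∧
      (δseq n : ℤ) - ⌊δ * ((n : ℝ) - (κ n : ℝ))⌋ < (B (κ n) : ℤ) :=
  claim_in_theorem_3_6_general A B εm εM hεm hεM δseq δ hδ κ hκtop hfo
end

section
/- Under Assumptions A with ε_m < ε_M, let (δ_n) be a sequence of natural numbers with A_n < δ_n < B_n for all n ≥ N₀ (some N₀), and suppose δ_n/n → δ with ε_m < δ < ε_M. Then liminf_{n→∞} (1/n)·log p_n(δ_n) ≥ log 𝒫(δ). -/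
set_option maxHeartbeats 1000000


open Filter Set

/-- Under Assumptions A with `ε_m < ε_M`, if `(δ_n)` is a sequence of naturals
with `A_n < δ_n < B_n` eventually and `δ_n/n → δ ∈ (ε_m, ε_M)`, then
`liminf (1/n) log p n δ_n ≥ log 𝒫(δ)`. -/
theorem liminf_lower_bound_thm36
    (p : ℕ → ℕ → ℕ) (A B : ℕ → ℕ) (K C : ℝ)
    (hK : 0 < K) (hpK : ∀ n, 1 ≤ n → ∀ m, (p n m : ℝ) ≤ K ^ n)
    (hC : 0 < C)
    (hABle : ∀ n, 1 ≤ n → A n ≤ B n)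
    (hBC : ∀ n, 1 ≤ n → (B n : ℝ) ≤ C * n)
    (hpos : ∀ n, 1 ≤ n → ∀ m, A n ≤ m → m ≤ B n → 0 < p n m)
    (hzero : ∀ n, 1 ≤ n → ∀ m, (m < A n ∨ B n < m) → p n m = 0)
    (hsuper : ∀ n₁ n₂, 1 ≤ n₁ → 1 ≤ n₂ → ∀ m₁ m₂,
      p n₁ m₁ * p n₂ m₂ ≤ p (n₁ + n₂) (m₁ + m₂))
    (εm εM : ℝ)
    (hεm : Tendsto (fun n : ℕ => (A n : ℝ) / n) atTop (nhds εm))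
    (hεM : Tendsto (fun n : ℕ => (B n : ℝ) / n) atTop (nhds εM))
    (hlt : εm < εM)
    (logP : ℝ → ℝ)
    (hP : ∀ ε ∈ Set.Ioo εm εM,
      Tendsto (fun n : ℕ => Real.log (p n ⌊ε * n⌋₊) / n) atTop (nhds (logP ε)))
    (δseq : ℕ → ℕ) (N₀ : ℕ)
    (hδseq : ∀ n, N₀ ≤ n → A n < δseq n ∧ δseq n < B n)
    (δ : ℝ) (hδ : δ ∈ Set.Ioo εm εM)
    (htend : Tendsto (fun n : ℕ => (δseq n : ℝ) / n) atTop (nhds δ)) :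
    logP δ ≤ Filter.liminf (fun n : ℕ => Real.log (p n (δseq n)) / n) atTop := by
  obtain ⟨hδ1, hδ2⟩ := hδ
  -- basic positivity facts
  have hεm0 : 0 ≤ εm :=
    ge_of_tendsto' hεm (fun n => div_nonneg (Nat.cast_nonneg _) (Nat.cast_nonneg _))
  have hδpos : 0 < δ := lt_of_le_of_lt hεm0 hδ1
  set θ : ℝ := (εm + δ) / 2 with hθdef
  set θ' : ℝ := (δ + εM) / 2 with hθ'def
  have hθ1 : εm < θ := by simp only [hθdef]; linarith
  have hθ2 : θ < δ := by simp only [hθdef]; linarith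
  have hθ0 : 0 ≤ θ := by simp only [hθdef]; linarith
  have hθ'1 : δ < θ' := by simp only [hθ'def]; linarith
  have hθ'2 : θ' < εM := by simp only [hθ'def]; linarith
  have hθ'0 : 0 < θ' := lt_trans hδpos hθ'1
  -- eventual bounds on A and B
  have E1 : ∀ᶠ m : ℕ in atTop, (A m : ℝ) ≤ θ * m := by
    filter_upwards [hεm.eventually_lt_const hθ1, eventually_ge_atTop 1] with m h1 h2
    have hm : (0:ℝ) < m := by exact_mod_cast h2
    have := (div_lt_iff₀ hm).mp h1
    linarith
  have E2 : ∀ᶠ m : ℕ in atTop, θ' * m ≤ (B m : ℝ) := by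
    filter_upwards [hεM.eventually_const_lt hθ'2, eventually_ge_atTop 1] with m h1 h2
    have hm : (0:ℝ) < m := by exact_mod_cast h2
    have := (lt_div_iff₀ hm).mp h1
    linarith
  set u : ℕ → ℝ := fun n => Real.log (p n (δseq n)) / n with hudef
  -- the key estimate, for every t ∈ (0,1)
  have key : ∀ t : ℝ, 0 < t → t < 1 → logP δ * t ≤ Filter.liminf u atTop := by
    intro t ht ht1
    have hη : 0 < 1 - t := by linarith
    set ρ : ℝ := min ((δ - θ) * (1 - t) / 2) ((θ' - δ) * (1 - t) / 2) with hρdef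
    have hρ0 : 0 < ρ := by
      apply lt_min <;> nlinarith
    have hρ1 : ρ ≤ (δ - θ) * (1 - t) / 2 := min_le_left _ _
    have hρ2 : ρ ≤ (θ' - δ) * (1 - t) / 2 := min_le_right _ _
    set q : ℕ → ℕ := fun n => ⌊t * (n : ℝ)⌋₊ with hqdef
    have hqn : ∀ n, q n ≤ n := by
      intro n
      have : (⌊t * (n:ℝ)⌋₊ : ℕ) ≤ ⌊((n:ℝ))⌋₊ :=
        Nat.floor_mono (by nlinarith [Nat.cast_nonneg (α := ℝ) n])
      simpa [hqdef] using this
    set kf : ℕ → ℕ := fun n => n - q n with hkdef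
    have hqTop : Tendsto q atTop atTop := by
      apply tendsto_nat_floor_atTop.comp
      exact Tendsto.const_mul_atTop ht tendsto_natCast_atTop_atTop
    have hkcast : ∀ n, (kf n : ℝ) = (n : ℝ) - (q n : ℝ) := by
      intro n
      simp only [hkdef]
      exact_mod_cast Nat.cast_sub (hqn n)
    have hq_le : ∀ n, (q n : ℝ) ≤ t * n := fun n => Nat.floor_le (by positivity)
    have hq_gt : ∀ n, t * n - 1 < (q n : ℝ) := fun n => Nat.sub_one_lt_floor _
    have hk_lb : ∀ n, (1 - t) * n ≤ (kf n : ℝ) := by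
      intro n
      rw [hkcast n]
      nlinarith [hq_le n]
    have hk_ub : ∀ n, (kf n : ℝ) < (1 - t) * n + 1 := by
      intro n
      rw [hkcast n]
      nlinarith [hq_gt n]
    have hkTop : Tendsto kf atTop atTop := by
      rw [← tendsto_natCast_atTop_iff (R := ℝ)]
      apply tendsto_atTop_mono (hk_lb)
      exact Tendsto.const_mul_atTop hη tendsto_natCast_atTop_atTop
    -- q n / n → t
    have hqdiv : Tendsto (fun n : ℕ => (q n : ℝ) / n) atTop (nhds t) := by
      have hlow : Tendsto (fun n : ℕ => t - 1 / (n : ℝ)) atTop (nhds t) := by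
        have : Tendsto (fun n : ℕ => 1 / (n : ℝ)) atTop (nhds 0) :=
          tendsto_one_div_atTop_nhds_zero_nat
        simpa using tendsto_const_nhds.sub this
      refine tendsto_of_tendsto_of_tendsto_of_le_of_le' hlow tendsto_const_nhds ?_ ?_
      · filter_upwards [eventually_ge_atTop 1] with n hn
        have hn0 : (0:ℝ) < n := by exact_mod_cast hn
        have heq : t - 1 / (n:ℝ) = (t * n - 1) / n := by field_simp
        rw [heq]
        gcongr
        exact (hq_gt n).le
      · filter_upwards [eventually_ge_atTop 1] with n hn
        have hn0 : (0:ℝ) < n := by exact_mod_cast hn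
        rw [div_le_iff₀ hn0]
        exact hq_le n
    set aa : ℕ → ℕ := fun n => ⌊δ * (q n : ℝ)⌋₊ with haadef
    set v : ℕ → ℝ :=
      fun n => Real.log (p (q n) (aa n)) / (q n : ℝ) * ((q n : ℝ) / n) with hvdef
    have hvT : Tendsto v atTop (nhds (logP δ * t)) := by
      have h1 : Tendsto (fun n : ℕ => Real.log (p (q n) (aa n)) / (q n : ℝ)) atTop
          (nhds (logP δ)) := by
        have := (hP δ ⟨hδ1, hδ2⟩).comp hqTop
        exact this
      exact h1.mul hqdiv
    -- the eventual comparison  v ≤ u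
    have hρη : 0 < (δ - θ) * (1 - t) / 2 := by nlinarith
    have hρη' : 0 < (θ' - δ) * (1 - t) / 2 := by nlinarith
    have he5 : ∀ᶠ n : ℕ in atTop, θ ≤ (δ - θ) * (1 - t) / 2 * n :=
      (Tendsto.const_mul_atTop hρη tendsto_natCast_atTop_atTop).eventually_ge_atTop θ
    have he6 : ∀ᶠ n : ℕ in atTop, δ + 1 ≤ (θ' - δ) * (1 - t) / 2 * n :=
      (Tendsto.const_mul_atTop hρη' tendsto_natCast_atTop_atTop).eventually_ge_atTop (δ + 1)
    have he11 : ∀ᶠ n : ℕ in atTop, 1 ≤ (δ - θ) * (q n : ℝ) := by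
      have hmono : Tendsto (fun m : ℕ => (δ - θ) * (m : ℝ)) atTop atTop :=
        Tendsto.const_mul_atTop (by linarith) tendsto_natCast_atTop_atTop
      exact hqTop.eventually (hmono.eventually_ge_atTop 1)
    have hVU : ∀ᶠ n in atTop, v n ≤ u n := by
      filter_upwards [hkTop.eventually E1, hkTop.eventually E2,
        htend.eventually_const_lt (show δ - ρ < δ by linarith),
        htend.eventually_lt_const (show δ < δ + ρ by linarith),
        he5, he6, hkTop.eventually_ge_atTop 1, hqTop.eventually_ge_atTop 1,
        hqTop.eventually E1, hqTop.eventually E2, he11,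
        eventually_ge_atTop 1] with n h1 h2 h3 h4 h5 h6 h7 h8 h9 h10 h11 h12
      have hn0 : (0:ℝ) < n := by exact_mod_cast h12
      have hq0 : (0:ℝ) < q n := by exact_mod_cast h8
      have hs_lb : (δ - ρ) * n ≤ (δseq n : ℝ) := le_of_lt ((lt_div_iff₀ hn0).mp h3)
      have hs_ub : (δseq n : ℝ) ≤ (δ + ρ) * n := le_of_lt ((div_lt_iff₀ hn0).mp h4)
      have hale : (aa n : ℝ) ≤ δ * q n := Nat.floor_le (by positivity)
      have hagt : δ * q n - 1 < (aa n : ℝ) := Nat.sub_one_lt_floor _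
      have hqle := hq_le n
      have hqgt := hq_gt n
      have hklb := hk_lb n
      have hkub := hk_ub n
      have hP1 : δ * (q n : ℝ) ≤ δ * (t * n) :=
        mul_le_mul_of_nonneg_left hqle (le_of_lt hδpos)
      have hP2 : ρ * n ≤ (δ - θ) * (1 - t) / 2 * n :=
        mul_le_mul_of_nonneg_right hρ1 (le_of_lt hn0)
      have hP3 : ρ * n ≤ (θ' - δ) * (1 - t) / 2 * n :=
        mul_le_mul_of_nonneg_right hρ2 (le_of_lt hn0)
      have hP4 : θ * (kf n : ℝ) ≤ θ * ((1 - t) * n + 1) :=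
        mul_le_mul_of_nonneg_left (le_of_lt hkub) hθ0
      have hP5 : θ' * ((1 - t) * n) ≤ θ' * (kf n : ℝ) :=
        mul_le_mul_of_nonneg_left hklb (le_of_lt hθ'0)
      have hP6 : δ * (t * n - 1) ≤ δ * (q n : ℝ) :=
        mul_le_mul_of_nonneg_left (le_of_lt hqgt) (le_of_lt hδpos)
      have hP7 : (0:ℝ) ≤ (1 - t) * n * ((δ + θ) / 2) :=
        mul_nonneg (mul_nonneg (le_of_lt hη) (le_of_lt hn0)) (by linarith)
      have hP8 : δ * (q n : ℝ) ≤ θ' * (q n : ℝ) :=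
        mul_le_mul_of_nonneg_right (le_of_lt hθ'1) (le_of_lt hq0)
      -- aa n ≤ δseq n
      have key1 : (aa n : ℝ) ≤ (δseq n : ℝ) := by
        linarith only [hale, hP1, hs_lb, hP2, hP7]
      have han : aa n ≤ δseq n := by exact_mod_cast key1
      have hrc : ((δseq n - aa n : ℕ) : ℝ) = (δseq n : ℝ) - (aa n : ℝ) :=
        Nat.cast_sub han
      -- r in the admissible window for kf n
      have hr_lb : θ * (kf n : ℝ) ≤ ((δseq n - aa n : ℕ) : ℝ) := by
        rw [hrc]
        linarith only [hP4, h5, hP2, hs_lb, hale, hP1]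
      have hr_ub : ((δseq n - aa n : ℕ) : ℝ) ≤ θ' * (kf n : ℝ) := by
        rw [hrc]
        linarith only [hs_ub, hagt, hP6, hP5, h6, hP3]
      have hA_r : A (kf n) ≤ δseq n - aa n := by
        exact_mod_cast le_trans h1 hr_lb
      have hr_B : δseq n - aa n ≤ B (kf n) := by
        exact_mod_cast le_trans hr_ub h2
      have hpkr : 0 < p (kf n) (δseq n - aa n) := hpos _ h7 _ hA_r hr_B
      -- aa in the admissible window for q n
      have hA_a : A (q n) ≤ aa n := by
        have : (A (q n) : ℝ) ≤ (aa n : ℝ) := by linarith only [h9, h11, hagt]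
        exact_mod_cast this
      have ha_B : aa n ≤ B (q n) := by
        have : (aa n : ℝ) ≤ (B (q n) : ℝ) := by
          linarith only [hale, hP8, h10]
        exact_mod_cast this
      have hpqa : 0 < p (q n) (aa n) := hpos _ h8 _ hA_a ha_B
      -- superadditivity
      have hsup := hsuper (q n) (kf n) h8 h7 (aa n) (δseq n - aa n)
      rw [show q n + kf n = n from Nat.add_sub_cancel' (hqn n),
        Nat.add_sub_cancel' han] at hsup
      have hple : p (q n) (aa n) ≤ p n (δseq n) :=
        le_trans (Nat.le_mul_of_pos_right _ hpkr) hsup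
      have hlog : Real.log (p (q n) (aa n)) ≤ Real.log (p n (δseq n)) :=
        Real.log_le_log (by exact_mod_cast hpqa) (by exact_mod_cast hple)
      have hlog0 : 0 ≤ Real.log (p (q n) (aa n)) :=
        Real.log_nonneg (by exact_mod_cast hpqa)
      show Real.log (p (q n) (aa n)) / (q n : ℝ) * ((q n : ℝ) / n)
          ≤ Real.log (p n (δseq n)) / n
      have heq : Real.log (p (q n) (aa n)) / (q n : ℝ) * ((q n : ℝ) / n)
          = Real.log (p (q n) (aa n)) / n := by
        field_simp
      rw [heq]
      gcongr
    -- liminf comparison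
    have hu_lb : ∀ᶠ n in atTop, (0:ℝ) ≤ u n := by
      filter_upwards [eventually_ge_atTop (max 1 N₀)] with n hn
      have h1 : 1 ≤ n := le_trans (le_max_left _ _) hn
      have h2 : N₀ ≤ n := le_trans (le_max_right _ _) hn
      obtain ⟨hab1, hab2⟩ := hδseq n h2
      have : 0 < p n (δseq n) := hpos n h1 _ (le_of_lt hab1) (le_of_lt hab2)
      have hlog0 : 0 ≤ Real.log (p n (δseq n)) := Real.log_nonneg (by exact_mod_cast this)
      exact div_nonneg hlog0 (Nat.cast_nonneg _)
    have hu_ub : ∀ᶠ n in atTop, u n ≤ Real.log K ⊔ 0 := by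
      filter_upwards [eventually_ge_atTop (max 1 N₀)] with n hn
      have h1 : 1 ≤ n := le_trans (le_max_left _ _) hn
      have h2 : N₀ ≤ n := le_trans (le_max_right _ _) hn
      obtain ⟨hab1, hab2⟩ := hδseq n h2
      have hp0 : 0 < p n (δseq n) := hpos n h1 _ (le_of_lt hab1) (le_of_lt hab2)
      have hn0 : (0:ℝ) < n := by exact_mod_cast h1
      have : Real.log (p n (δseq n)) ≤ Real.log (K ^ n) :=
        Real.log_le_log (by exact_mod_cast hp0) (hpK n h1 _)
      rw [Real.log_pow] at this
      have : u n ≤ Real.log K := by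
        simp only [hudef]
        rw [div_le_iff₀ hn0]
        calc Real.log (p n (δseq n)) ≤ n * Real.log K := this
          _ = Real.log K * n := by ring
      exact le_trans this (le_max_left _ _)
    calc logP δ * t = Filter.liminf v atTop := (hvT.liminf_eq).symm
      _ ≤ Filter.liminf u atTop :=
          Filter.liminf_le_liminf hVU hvT.isBoundedUnder_ge
            ((Filter.isBoundedUnder_of_eventually_le hu_ub).isCoboundedUnder_ge)
  -- pass to the limit t → 1
  have hseq : Tendsto (fun j : ℕ => logP δ * (1 - 1 / ((j : ℝ) + 2))) atTop
      (nhds (logP δ * 1)) := by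
    apply Tendsto.const_mul
    have h2 : Tendsto (fun j : ℕ => ((j : ℝ) + 2)) atTop atTop :=
      tendsto_atTop_add_const_right _ 2 tendsto_natCast_atTop_atTop
    have := h2.inv_tendsto_atTop
    simpa [one_div] using tendsto_const_nhds.sub this
  have hle : logP δ * 1 ≤ Filter.liminf u atTop := by
    apply le_of_tendsto hseq
    apply Filter.Eventually.of_forall
    intro j
    have hj2 : (0:ℝ) < (j : ℝ) + 2 := by positivity
    have h1 : (0:ℝ) < 1 - 1 / ((j : ℝ) + 2) := by
      rw [sub_pos, div_lt_one hj2]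
      have : (0:ℝ) ≤ (j : ℝ) := Nat.cast_nonneg j
      linarith
    have h2 : 1 - 1 / ((j : ℝ) + 2) < 1 := by
      have : (0:ℝ) < 1 / ((j : ℝ) + 2) := by positivity
      linarith
    exact key _ h1 h2
  simpa using hle
end

section
/- Under Assumptions A with ε_m < ε_M, let (δ_n) be a sequence of natural numbers with A_n < δ_n < B_n for all n ≥ N₀ (some N₀), and suppose δ_n/n → δ with ε_m < δ < ε_M. Then lim_{n→∞} (1/n)·log p_n(δ_n) = log 𝒫(δ). -/
/-!
Fix `α ∈ (0, 1)` and `k = ⌈α n⌉`. Superadditivity with a filler block of size `k` and mass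
density `δ` (which has positive weight since `δ ∈ (ε_m, ε_M)`) gives
`p_{n-k}(⌊δ(n-k)⌋) ≤ p_n(δ_n) ≤ p_{n+k}(⌊δ(n+k)⌋)`, so eventually `(1/n) log p_n(δ_n)` lies
between sequences tending to `(1 - α) log 𝒫(δ)` and `(1 + α) log 𝒫(δ)`. Letting `α → 0` ends
the proof.
-/

open Filter Set Topology

theorem tendsto_of_eventually_bounds {γ ι β : Type*} [TopologicalSpace β] [LinearOrder β]
    [OrderTopology β] {la : Filter γ} {l : Filter ι} [l.NeBot] {f : γ → β} {L : β}
    {lo hi : ι → β} (hlo : Tendsto lo l (𝓝 L)) (hhi : Tendsto hi l (𝓝 L))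
    (hf : ∀ᶠ i in l, (∃ g, Tendsto g la (𝓝 (lo i)) ∧ g ≤ᶠ[la] f) ∧
      ∃ g, Tendsto g la (𝓝 (hi i)) ∧ f ≤ᶠ[la] g) :
    Tendsto f la (𝓝 L) := by
  rw [tendsto_order]
  refine ⟨fun a ha => ?_, fun b hb => ?_⟩
  · obtain ⟨i, hai, ⟨g, hg, hgf⟩, -⟩ := ((hlo.eventually (lt_mem_nhds ha)).and hf).exists
    filter_upwards [hg.eventually (lt_mem_nhds hai), hgf] with n h h' using h.trans_le h'
  · obtain ⟨i, hib, -, g, hg, hfg⟩ := ((hhi.eventually (gt_mem_nhds hb)).and hf).exists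
    filter_upwards [hg.eventually (gt_mem_nhds hib), hfg] with n h h' using h'.trans_lt h

theorem tendsto_natCast_div_self : Tendsto (fun n : ℕ => (n : ℝ) / n) atTop (𝓝 1) :=
  tendsto_const_nhds.congr' <| by
    filter_upwards [eventually_ne_atTop 0] with n hn
    rw [div_self (Nat.cast_ne_zero.mpr hn)]

theorem tendsto_atTop_of_tendsto_natCast_div {u : ℕ → ℕ} {β : ℝ} (hβ : 0 < β)
    (hu : Tendsto (fun n : ℕ => (u n : ℝ) / n) atTop (𝓝 β)) : Tendsto u atTop atTop :=
  tendsto_natCast_atTop_iff.mp (tendsto_natCast_atTop_atTop.num hβ hu)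

theorem tendsto_floor_mul_div {u : ℕ → ℕ} {β δ : ℝ} (hβ : 0 < β) (hδ : 0 ≤ δ)
    (hu : Tendsto (fun n : ℕ => (u n : ℝ) / n) atTop (𝓝 β)) :
    Tendsto (fun n : ℕ => (⌊δ * u n⌋₊ : ℝ) / n) atTop (𝓝 (β * δ)) := by
  have hfloor := (tendsto_nat_floor_mul_div_atTop hδ).comp
    (tendsto_natCast_atTop_iff.mpr (tendsto_atTop_of_tendsto_natCast_div hβ hu))
  refine (hu.mul hfloor).congr fun n => ?_
  rcases eq_or_ne (u n : ℝ) 0 with h | h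
  · simp [h]
  · simp only [Function.comp_apply]
    rw [mul_comm, div_mul_div_cancel₀ h]

section Superadditive

variable {p : ℕ → ℕ → ℕ} {A B : ℕ → ℕ} {εm εM : ℝ}

theorem eventually_pos_of_tendsto_div
    (hpos : ∀ n, 1 ≤ n → ∀ m, A n ≤ m → m ≤ B n → 0 < p n m)
    (hεm : Tendsto (fun n : ℕ => (A n : ℝ) / n) atTop (𝓝 εm))
    (hεM : Tendsto (fun n : ℕ => (B n : ℝ) / n) atTop (𝓝 εM))
    {u x : ℕ → ℕ} {β δ : ℝ} (hβ : 0 < β)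
    (hu : Tendsto (fun n : ℕ => (u n : ℝ) / n) atTop (𝓝 β))
    (hx : Tendsto (fun n : ℕ => (x n : ℝ) / n) atTop (𝓝 (β * δ))) (hδ : δ ∈ Ioo εm εM) :
    ∀ᶠ n in atTop, 0 < p (u n) (x n) := by
  have hu_top := tendsto_atTop_of_tendsto_natCast_div hβ hu
  have hxu : Tendsto (fun n => (x n : ℝ) / u n) atTop (𝓝 δ) := by
    have h := hx.div hu hβ.ne'
    rw [mul_div_cancel_left₀ _ hβ.ne'] at h
    refine h.congr' ?_
    filter_upwards [eventually_ne_atTop 0] with n hn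
    exact div_div_div_cancel_right₀ (Nat.cast_ne_zero.mpr hn) _ _
  filter_upwards [(hεm.comp hu_top).eventually_lt hxu hδ.1,
    hxu.eventually_lt (hεM.comp hu_top) hδ.2, hu_top.eventually_ge_atTop 1] with n hA hB hu1
  have hu0 : (0 : ℝ) < u n := by exact_mod_cast hu1
  have hA' := (div_lt_div_iff_of_pos_right hu0).mp hA
  have hB' := (div_lt_div_iff_of_pos_right hu0).mp hB
  exact hpos _ hu1 _ (by exact_mod_cast hA'.le) (by exact_mod_cast hB'.le)

theorem eventually_log_le_log
    (hpos : ∀ n, 1 ≤ n → ∀ m, A n ≤ m → m ≤ B n → 0 < p n m)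
    (hsuper : ∀ n₁ n₂, 1 ≤ n₁ → 1 ≤ n₂ → ∀ m₁ m₂,
      p n₁ m₁ * p n₂ m₂ ≤ p (n₁ + n₂) (m₁ + m₂))
    (hεm : Tendsto (fun n : ℕ => (A n : ℝ) / n) atTop (𝓝 εm))
    (hεM : Tendsto (fun n : ℕ => (B n : ℝ) / n) atTop (𝓝 εM))
    {n₁ n₂ m M : ℕ → ℕ} {β α δ : ℝ} (hβ : 0 < β) (hα : 0 < α)
    (hn₁ : Tendsto (fun n : ℕ => (n₁ n : ℝ) / n) atTop (𝓝 β))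
    (hn₂ : Tendsto (fun n : ℕ => (n₂ n : ℝ) / n) atTop (𝓝 α))
    (hm : Tendsto (fun n : ℕ => (m n : ℝ) / n) atTop (𝓝 (β * δ)))
    (hM : Tendsto (fun n : ℕ => (M n : ℝ) / n) atTop (𝓝 ((β + α) * δ)))
    (hδ : δ ∈ Ioo εm εM) :
    ∀ᶠ n in atTop, Real.log (p (n₁ n) (m n)) ≤ Real.log (p (n₁ n + n₂ n) (M n)) := by
  have hδ0 : 0 < δ := (ge_of_tendsto' hεm fun n => by positivity).trans_lt hδ.1
  have hmM : ∀ᶠ n in atTop, m n ≤ M n := by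
    filter_upwards [hm.eventually_lt hM (by nlinarith), eventually_gt_atTop 0] with n h hn
    exact_mod_cast ((div_lt_div_iff_of_pos_right (Nat.cast_pos.mpr hn)).mp h).le
  have hfill : Tendsto (fun n : ℕ => ((M n - m n : ℕ) : ℝ) / n) atTop (𝓝 (α * δ)) := by
    have h := hM.sub hm
    rw [show (β + α) * δ - β * δ = α * δ by ring] at h
    refine h.congr' ?_
    filter_upwards [hmM] with n h
    rw [Nat.cast_sub h, sub_div]
  filter_upwards [hmM, eventually_pos_of_tendsto_div hpos hεm hεM hβ hn₁ hm hδ,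
    eventually_pos_of_tendsto_div hpos hεm hεM hα hn₂ hfill hδ,
    (tendsto_atTop_of_tendsto_natCast_div hβ hn₁).eventually_ge_atTop 1,
    (tendsto_atTop_of_tendsto_natCast_div hα hn₂).eventually_ge_atTop 1]
    with n hle hp₁ hp₂ h₁ h₂
  have hp : p (n₁ n) (m n) ≤ p (n₁ n + n₂ n) (M n) :=
    calc p (n₁ n) (m n) ≤ p (n₁ n) (m n) * p (n₂ n) (M n - m n) := Nat.le_mul_of_pos_right _ hp₂
      _ ≤ p (n₁ n + n₂ n) (m n + (M n - m n)) := hsuper _ _ h₁ h₂ _ _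
      _ = p (n₁ n + n₂ n) (M n) := by rw [Nat.add_sub_cancel' hle]
  exact Real.log_le_log (by exact_mod_cast hp₁) (by exact_mod_cast hp)

theorem tendsto_log_floor_div {logP : ℝ → ℝ}
    (hP : ∀ ε ∈ Ioo εm εM,
      Tendsto (fun n : ℕ => Real.log (p n ⌊ε * n⌋₊) / n) atTop (𝓝 (logP ε)))
    {u : ℕ → ℕ} {β δ : ℝ} (hβ : 0 < β)
    (hu : Tendsto (fun n : ℕ => (u n : ℝ) / n) atTop (𝓝 β)) (hδ : δ ∈ Ioo εm εM) :
    Tendsto (fun n : ℕ => Real.log (p (u n) ⌊δ * u n⌋₊) / n) atTop (𝓝 (β * logP δ)) := by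
  have hu_top := tendsto_atTop_of_tendsto_natCast_div hβ hu
  refine (hu.mul ((hP δ hδ).comp hu_top)).congr' ?_
  filter_upwards [hu_top.eventually_ne_atTop 0] with n hn
  simp only [Function.comp_apply]
  rw [mul_comm, div_mul_div_cancel₀ (Nat.cast_ne_zero.mpr hn)]

theorem exists_bounds_log_div
    (hpos : ∀ n, 1 ≤ n → ∀ m, A n ≤ m → m ≤ B n → 0 < p n m)
    (hsuper : ∀ n₁ n₂, 1 ≤ n₁ → 1 ≤ n₂ → ∀ m₁ m₂,
      p n₁ m₁ * p n₂ m₂ ≤ p (n₁ + n₂) (m₁ + m₂))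
    (hεm : Tendsto (fun n : ℕ => (A n : ℝ) / n) atTop (𝓝 εm))
    (hεM : Tendsto (fun n : ℕ => (B n : ℝ) / n) atTop (𝓝 εM))
    {logP : ℝ → ℝ}
    (hP : ∀ ε ∈ Ioo εm εM,
      Tendsto (fun n : ℕ => Real.log (p n ⌊ε * n⌋₊) / n) atTop (𝓝 (logP ε)))
    {δseq : ℕ → ℕ} {δ : ℝ} (hδ : δ ∈ Ioo εm εM)
    (htend : Tendsto (fun n : ℕ => (δseq n : ℝ) / n) atTop (𝓝 δ)) {α : ℝ} (hα : α ∈ Ioo 0 1) :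
    (∃ g, Tendsto g atTop (𝓝 ((1 - α) * logP δ)) ∧
      g ≤ᶠ[atTop] fun n => Real.log (p n (δseq n)) / n) ∧
    ∃ g, Tendsto g atTop (𝓝 ((1 + α) * logP δ)) ∧
      (fun n => Real.log (p n (δseq n)) / n) ≤ᶠ[atTop] g := by
  obtain ⟨hα0, hα1⟩ := hα
  have hδ0 : 0 ≤ δ := (ge_of_tendsto' hεm fun n => by positivity).trans hδ.1.le
  set k : ℕ → ℕ := fun n => ⌈α * n⌉₊
  have hk : Tendsto (fun n : ℕ => (k n : ℝ) / n) atTop (𝓝 α) :=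
    (tendsto_nat_ceil_mul_div_atTop hα0.le).comp tendsto_natCast_atTop_atTop
  have hkn (n : ℕ) : k n ≤ n := Nat.ceil_le.mpr (mul_le_of_le_one_left n.cast_nonneg hα1.le)
  have hshort : Tendsto (fun n : ℕ => ((n - k n : ℕ) : ℝ) / n) atTop (𝓝 (1 - α)) :=
    (tendsto_natCast_div_self.sub hk).congr fun n => by rw [Nat.cast_sub (hkn n), sub_div]
  have hlong : Tendsto (fun n : ℕ => ((n + k n : ℕ) : ℝ) / n) atTop (𝓝 (1 + α)) :=
    (tendsto_natCast_div_self.add hk).congr fun n => by rw [Nat.cast_add, add_div]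
  refine ⟨⟨_, tendsto_log_floor_div hP (by linarith) hshort hδ, ?_⟩,
    ⟨_, tendsto_log_floor_div hP (by linarith) hlong hδ, ?_⟩⟩
  · have hM : Tendsto (fun n : ℕ => (δseq n : ℝ) / n) atTop (𝓝 ((1 - α + α) * δ)) := by
      rwa [sub_add_cancel, one_mul]
    filter_upwards [eventually_log_le_log hpos hsuper hεm hεM (by linarith) hα0 hshort hk
      (tendsto_floor_mul_div (by linarith) hδ0 hshort) hM hδ] with n h
    rw [Nat.sub_add_cancel (hkn n)] at h
    exact div_le_div_of_nonneg_right h n.cast_nonneg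
  · have hm : Tendsto (fun n : ℕ => (δseq n : ℝ) / n) atTop (𝓝 (1 * δ)) := by rwa [one_mul]
    filter_upwards [eventually_log_le_log hpos hsuper hεm hεM one_pos hα0
      tendsto_natCast_div_self hk hm (tendsto_floor_mul_div (by linarith) hδ0 hlong) hδ] with n h
    exact div_le_div_of_nonneg_right h n.cast_nonneg

end Superadditive

theorem theorem_3_6_general
    (p : ℕ → ℕ → ℕ) (A B : ℕ → ℕ)
    (hpos : ∀ n, 1 ≤ n → ∀ m, A n ≤ m → m ≤ B n → 0 < p n m)
    (hsuper : ∀ n₁ n₂, 1 ≤ n₁ → 1 ≤ n₂ → ∀ m₁ m₂,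
      p n₁ m₁ * p n₂ m₂ ≤ p (n₁ + n₂) (m₁ + m₂))
    (εm εM : ℝ)
    (hεm : Tendsto (fun n : ℕ => (A n : ℝ) / n) atTop (nhds εm))
    (hεM : Tendsto (fun n : ℕ => (B n : ℝ) / n) atTop (nhds εM))
    (logP : ℝ → ℝ)
    (hP : ∀ ε ∈ Set.Ioo εm εM,
      Tendsto (fun n : ℕ => Real.log (p n ⌊ε * n⌋₊) / n) atTop (nhds (logP ε)))
    (δseq : ℕ → ℕ)
    (δ : ℝ) (hδ : δ ∈ Set.Ioo εm εM)
    (htend : Tendsto (fun n : ℕ => (δseq n : ℝ) / n) atTop (nhds δ)) :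
    Tendsto (fun n : ℕ => Real.log (p n (δseq n)) / n) atTop (nhds (logP δ)) := by
  refine tendsto_of_eventually_bounds (l := 𝓝[>] 0) (lo := fun α => (1 - α) * logP δ)
    (hi := fun α => (1 + α) * logP δ) ?_ ?_ ?_
  · simpa using (((tendsto_const_nhds (x := (1 : ℝ))).sub tendsto_id).mul_const
      (logP δ)).mono_left (nhdsWithin_le_nhds (a := (0 : ℝ)))
  · simpa using (((tendsto_const_nhds (x := (1 : ℝ))).add tendsto_id).mul_const
      (logP δ)).mono_left (nhdsWithin_le_nhds (a := (0 : ℝ)))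
  filter_upwards [Ioo_mem_nhdsGT one_pos] with α hα
    using exists_bounds_log_div hpos hsuper hεm hεM hP hδ htend hα

/-- Under Assumptions A with `ε_m < ε_M`, if `(δ_n)` is a sequence of naturals
with `A_n < δ_n < B_n` eventually and `δ_n/n → δ ∈ (ε_m, ε_M)`, then
`lim (1/n) log p n δ_n = log 𝒫(δ)`. -/
theorem theorem_3_6
    (p : ℕ → ℕ → ℕ) (A B : ℕ → ℕ) (K C : ℝ)
    (hK : 0 < K) (hpK : ∀ n, 1 ≤ n → ∀ m, (p n m : ℝ) ≤ K ^ n)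
    (hC : 0 < C)
    (hABle : ∀ n, 1 ≤ n → A n ≤ B n)
    (hBC : ∀ n, 1 ≤ n → (B n : ℝ) ≤ C * n)
    (hpos : ∀ n, 1 ≤ n → ∀ m, A n ≤ m → m ≤ B n → 0 < p n m)
    (hzero : ∀ n, 1 ≤ n → ∀ m, (m < A n ∨ B n < m) → p n m = 0)
    (hsuper : ∀ n₁ n₂, 1 ≤ n₁ → 1 ≤ n₂ → ∀ m₁ m₂,
      p n₁ m₁ * p n₂ m₂ ≤ p (n₁ + n₂) (m₁ + m₂))
    (εm εM : ℝ)
    (hεm : Tendsto (fun n : ℕ => (A n : ℝ) / n) atTop (nhds εm))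
    (hεM : Tendsto (fun n : ℕ => (B n : ℝ) / n) atTop (nhds εM))
    (hlt : εm < εM)
    (logP : ℝ → ℝ)
    (hP : ∀ ε ∈ Set.Ioo εm εM,
      Tendsto (fun n : ℕ => Real.log (p n ⌊ε * n⌋₊) / n) atTop (nhds (logP ε)))
    (δseq : ℕ → ℕ) (N₀ : ℕ)
    (hδseq : ∀ n, N₀ ≤ n → A n < δseq n ∧ δseq n < B n)
    (δ : ℝ) (hδ : δ ∈ Set.Ioo εm εM)
    (htend : Tendsto (fun n : ℕ => (δseq n : ℝ) / n) atTop (nhds δ)) :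
    Tendsto (fun n : ℕ => Real.log (p n (δseq n)) / n) atTop (nhds (logP δ)) :=
  theorem_3_6_general p A B hpos hsuper εm εM hεm hεM logP hP δseq δ hδ htend
end

section
/- Under Assumptions A with ε_m < ε_M, define p_n(≤m) := Σ_{j=A_n}^{m} p_n(j), and suppose that for every ε ∈ (ε_m, ε_M) the limit log 𝒫(≤ε) := lim_{n→∞} (1/n)·log p_n(≤⌊εn⌋) exists and that ε ↦ log 𝒫(≤ε) is continuous on (ε_m, ε_M). Let (δ_n) be a sequence of natural numbers with A_n < δ_n < B_n for all n ≥ N₀ (some N₀) and δ_n/n → δ with ε_m < δ < ε_M. Then limsup_{n→∞} (1/n)·log p_n(δ_n) ≤ log 𝒫(≤δ). -/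
open Filter Set Topology

/-!
Since `δ_n ≤ ⌊εn⌋` eventually for every `ε > δ`, the single term `p_n(δ_n)` is dominated by the
partial sum `p_n(≤⌊εn⌋)`, so the limsup is at most `log 𝒫(≤ε)`; letting `ε ↓ δ` and using
continuity gives the bound at `δ`.
-/

-- Also for `a = 0`, thanks to the junk value `Real.log 0 = 0`.
theorem Real.log_natCast_le_log_natCast {a b : ℕ} (h : a ≤ b) :
    Real.log a ≤ Real.log b := by
  rcases a.eq_zero_or_pos with rfl | ha
  · simpa using Real.log_natCast_nonneg b
  · exact Real.log_le_log (by exact_mod_cast ha) (by exact_mod_cast h)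

theorem Real.log_natCast_le_log_sum {ι : Type*} (s : Finset ι) (f : ι → ℕ) {i : ι} (hi : i ∈ s) :
    Real.log (f i) ≤ Real.log (∑ j ∈ s, (f j : ℝ)) := by
  rw [← Nat.cast_sum]
  exact Real.log_natCast_le_log_natCast (Finset.single_le_sum (fun _ _ => Nat.zero_le _) hi)

theorem Filter.limsup_le_of_eventually_le_of_tendsto {α : Type*} {F : Filter α} [F.NeBot]
    {f g : α → ℝ} {c l : ℝ} (hf : ∀ᶠ x in F, c ≤ f x) (hfg : f ≤ᶠ[F] g)
    (hg : Tendsto g F (𝓝 l)) : limsup f F ≤ l :=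
  hg.limsup_eq ▸ limsup_le_limsup hfg (isCoboundedUnder_le_of_eventually_le F hf)
    hg.isBoundedUnder_le

theorem limsup_le_integrated_le_general
    (p : ℕ → ℕ → ℕ) (A B : ℕ → ℕ)
    (εm εM : ℝ)
    (logPle : ℝ → ℝ)
    (hPle : ∀ ε ∈ Set.Ioo εm εM,
      Tendsto (fun n : ℕ =>
          Real.log (∑ j ∈ Finset.Icc (A n) ⌊ε * n⌋₊, p n j) / n)
        atTop (nhds (logPle ε)))
    (hcont : ContinuousOn logPle (Set.Ioo εm εM))
    (δseq : ℕ → ℕ) (N₀ : ℕ)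
    (hδseq : ∀ n, N₀ ≤ n → A n < δseq n ∧ δseq n < B n)
    (δ : ℝ) (hδ : δ ∈ Set.Ioo εm εM)
    (htend : Tendsto (fun n : ℕ => (δseq n : ℝ) / n) atTop (nhds δ)) :
    Filter.limsup (fun n : ℕ => Real.log (p n (δseq n)) / n) atTop ≤ logPle δ := by
  have le_partial_sum : ∀ ε > δ, ∀ᶠ n : ℕ in atTop, Real.log (p n (δseq n)) / n ≤
      Real.log (∑ j ∈ Finset.Icc (A n) ⌊ε * n⌋₊, p n j) / n := by
    intro ε hε
    filter_upwards [htend.eventually_lt_const hε, eventually_ge_atTop N₀,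
      eventually_gt_atTop 0] with n hδε hN hn
    have hδn : (δseq n : ℝ) ≤ ε * n :=
      ((div_lt_iff₀ (Nat.cast_pos.mpr hn)).mp hδε).le
    exact div_le_div_of_nonneg_right (Real.log_natCast_le_log_sum _ (p n)
      (Finset.mem_Icc.mpr ⟨(hδseq n hN).1.le, Nat.le_floor hδn⟩)) n.cast_nonneg
  have limsup_le : ∀ ε ∈ Ioo δ εM, limsup (fun n : ℕ => Real.log (p n (δseq n)) / n) atTop
      ≤ logPle ε := fun ε hε =>
    limsup_le_of_eventually_le_of_tendsto
      (Eventually.of_forall fun n => div_nonneg (Real.log_natCast_nonneg _) n.cast_nonneg)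
      (le_partial_sum ε hε.1) (hPle ε ⟨hδ.1.trans hε.1, hε.2⟩)
  have := left_nhdsWithin_Ioo_neBot hδ.2
  exact ge_of_tendsto ((hcont δ hδ).mono (Ioo_subset_Ioo_left hδ.1.le))
    (eventually_nhdsWithin_of_forall limsup_le)

/-- Under Assumptions A with `ε_m < ε_M`, with `p_n(≤m) = Σ_{j=A_n}^m p n j`:
if for every `ε ∈ (ε_m, ε_M)` the limit `log 𝒫(≤ε) = lim (1/n) log p_n(≤⌊εn⌋)`
exists and is continuous in `ε`, and `(δ_n)` satisfies `A_n < δ_n < B_n`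
eventually with `δ_n/n → δ ∈ (ε_m, ε_M)`, then
`limsup (1/n) log p n δ_n ≤ log 𝒫(≤δ)`. -/
theorem limsup_le_integrated_le
    (p : ℕ → ℕ → ℕ) (A B : ℕ → ℕ) (K C : ℝ)
    (hK : 0 < K) (hpK : ∀ n, 1 ≤ n → ∀ m, (p n m : ℝ) ≤ K ^ n)
    (hC : 0 < C)
    (hABle : ∀ n, 1 ≤ n → A n ≤ B n)
    (hBC : ∀ n, 1 ≤ n → (B n : ℝ) ≤ C * n)
    (hpos : ∀ n, 1 ≤ n → ∀ m, A n ≤ m → m ≤ B n → 0 < p n m)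
    (hzero : ∀ n, 1 ≤ n → ∀ m, (m < A n ∨ B n < m) → p n m = 0)
    (hsuper : ∀ n₁ n₂, 1 ≤ n₁ → 1 ≤ n₂ → ∀ m₁ m₂,
      p n₁ m₁ * p n₂ m₂ ≤ p (n₁ + n₂) (m₁ + m₂))
    (εm εM : ℝ)
    (hεm : Tendsto (fun n : ℕ => (A n : ℝ) / n) atTop (nhds εm))
    (hεM : Tendsto (fun n : ℕ => (B n : ℝ) / n) atTop (nhds εM))
    (hlt : εm < εM)
    (logPle : ℝ → ℝ)
    (hPle : ∀ ε ∈ Set.Ioo εm εM,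
      Tendsto (fun n : ℕ =>
          Real.log (∑ j ∈ Finset.Icc (A n) ⌊ε * n⌋₊, p n j) / n)
        atTop (nhds (logPle ε)))
    (hcont : ContinuousOn logPle (Set.Ioo εm εM))
    (δseq : ℕ → ℕ) (N₀ : ℕ)
    (hδseq : ∀ n, N₀ ≤ n → A n < δseq n ∧ δseq n < B n)
    (δ : ℝ) (hδ : δ ∈ Set.Ioo εm εM)
    (htend : Tendsto (fun n : ℕ => (δseq n : ℝ) / n) atTop (nhds δ)) :
    Filter.limsup (fun n : ℕ => Real.log (p n (δseq n)) / n) atTop ≤ logPle δ :=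
  limsup_le_integrated_le_general p A B εm εM logPle hPle hcont δseq N₀ hδseq δ hδ htend
end
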